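/- arXiv:1807.07721 — 9 statements merged into one kernel-verified Lean document; each statement's English description precedes it below -/
import Mathlib

section
/- For the winning streak Markov chain on {1,…,n}, the access time equals H(μ,ν) = max_{j ∈ {1,…,n}} ( E_{Z∼ν}[2^Z · 1_{Z ≤ j}] − E_{Z∼μ}[2^Z · 1_{Z ≤ j}] ). -/
open Finset

/- The hitting times have the form `E_i[τ_j] = 2^j − 2^i 1_{i ≤ j}`. Since `μ` and `ν` have the same
total mass, the constant `2^j` cancels in `Σ_i (μ_i − ν_i) E_i[τ_j]`, leaving
`E_ν[2^Z 1_{Z ≤ j}] − E_μ[2^Z 1_{Z ≤ j}]` for every `j`, hence also after taking the maximum. -/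

theorem ite_lt_sub_ite_lt_eq_sub_ite_le {α R : Type*} [LinearOrder α] [Ring R] (f : α → R)
    (i j : α) :
    (if i < j then f j - f i else if j < i then f j else 0) = f j - if i ≤ j then f i else 0 := by
  rcases lt_trichotomy i j with h | rfl | h
  · simp [h, h.le]
  · simp
  · simp [h, h.not_gt, h.not_ge]

theorem sum_sub_mul_const_sub_eq {ι R : Type*} [CommRing R] (s : Finset ι) {μ ν : ι → R}
    (hμν : ∑ i ∈ s, μ i = ∑ i ∈ s, ν i) (c : R) (f : ι → R) :
    ∑ i ∈ s, (μ i - ν i) * (c - f i) = ∑ i ∈ s, ν i * f i - ∑ i ∈ s, μ i * f i := by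
  have hc : ∑ i ∈ s, (μ i - ν i) * c = 0 := by
    rw [← sum_mul, sum_sub_distrib, hμν, sub_self, zero_mul]
  calc ∑ i ∈ s, (μ i - ν i) * (c - f i)
      = ∑ i ∈ s, (μ i - ν i) * c - ∑ i ∈ s, (μ i - ν i) * f i := by
        simp only [mul_sub, sum_sub_distrib]
    _ = ∑ i ∈ s, ν i * f i - ∑ i ∈ s, μ i * f i := by
        rw [hc, zero_sub, neg_eq_iff_eq_neg, neg_sub]
        simp only [sub_mul, sum_sub_distrib]

theorem winning_streak_access_time_formula_general
    (n : ℕ) (hn : 0 < n)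
    (ET : Fin n → Fin n → ℝ)
    (hET : ∀ i j : Fin n, ET i j =
      if (i : ℕ) < (j : ℕ) then 2 ^ ((j : ℕ) + 1) - 2 ^ ((i : ℕ) + 1)
      else if (j : ℕ) < (i : ℕ) then 2 ^ ((j : ℕ) + 1)
      else 0)
    (μ ν : Fin n → ℝ)
    (hμ1 : ∑ i, μ i = 1)
    (hν1 : ∑ i, ν i = 1) :
    univ.sup' ⟨⟨0, hn⟩, mem_univ _⟩ (fun j => ∑ i, (μ i - ν i) * ET i j)
      = univ.sup' ⟨⟨0, hn⟩, mem_univ _⟩ (fun j : Fin n =>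
          (∑ i, ν i * (if (i : ℕ) ≤ (j : ℕ) then (2 : ℝ) ^ ((i : ℕ) + 1) else 0))
          - (∑ i, μ i * (if (i : ℕ) ≤ (j : ℕ) then (2 : ℝ) ^ ((i : ℕ) + 1) else 0))) := by
  refine sup'_congr _ rfl fun j _ => ?_
  simp only [hET, ite_lt_sub_ite_lt_eq_sub_ite_le (fun k : ℕ => (2 : ℝ) ^ (k + 1))]
  exact sum_sub_mul_const_sub_eq univ (hμ1.trans hν1.symm) _ _

/-- For the winning streak Markov chain on `{1,…,n}` (state `k : Fin n`
represents the integer `k+1`), whose mean hitting times are `E_i[τ_j] = 2^j − 2^i`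
for `i < j` and `E_i[τ_j] = 2^j` for `i > j`, the access time
`H(μ,ν) = max_j Σ_i (μ_i − ν_i) E_i[τ_j]` equals
`max_j (E_ν[2^Z 1_{Z ≤ j}] − E_μ[2^Z 1_{Z ≤ j}])`. -/
theorem winning_streak_access_time_formula
    (n : ℕ) (hn : 0 < n)
    (ET : Fin n → Fin n → ℝ)
    (hET : ∀ i j : Fin n, ET i j =
      if (i : ℕ) < (j : ℕ) then 2 ^ ((j : ℕ) + 1) - 2 ^ ((i : ℕ) + 1)
      else if (j : ℕ) < (i : ℕ) then 2 ^ ((j : ℕ) + 1)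
      else 0)
    (μ ν : Fin n → ℝ)
    (hμ0 : ∀ i, 0 ≤ μ i) (hμ1 : ∑ i, μ i = 1)
    (hν0 : ∀ i, 0 ≤ ν i) (hν1 : ∑ i, ν i = 1) :
    univ.sup' ⟨⟨0, hn⟩, mem_univ _⟩ (fun j => ∑ i, (μ i - ν i) * ET i j)
      = univ.sup' ⟨⟨0, hn⟩, mem_univ _⟩ (fun j : Fin n =>
          (∑ i, ν i * (if (i : ℕ) ≤ (j : ℕ) then (2 : ℝ) ^ ((i : ℕ) + 1) else 0))
          - (∑ i, μ i * (if (i : ℕ) ≤ (j : ℕ) then (2 : ℝ) ^ ((i : ℕ) + 1) else 0))) :=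
  winning_streak_access_time_formula_general n hn ET hET μ ν hμ1 hν1
end

section
/- For the winning streak Markov chain on {1,…,n}, the access time satisfies max{ E_{Z∼ν}[2^Z] − E_{Z∼μ}[2^Z], 0 } ≤ H(μ,ν) ≤ 2^n. -/
/-! Since `∑ i, (μ i - ν i) = 0`, the access sum against the target `j` is the partial sum
`∑ i ≤ j, (ν i - μ i) 2^(i+1)`. At the top state this is `E_ν[2^Z] - E_μ[2^Z]`, and every partial
sum is at most `∑ i, ν i 2^(i+1) ≤ 2^n`. Nonnegativity is the random target lemma: for the
stationary distribution `π`, `∑ j, π j E_i[τ_j]` does not depend on `i`, so the `π`-average of the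
access sums vanishes and one of them is nonnegative. -/

open Finset

theorem Finset.sup'_nonneg_of_sum_mul_eq_zero {κ : Type*} {s : Finset κ} (hs : s.Nonempty)
    {f w : κ → ℝ} (hw : ∀ j ∈ s, 0 < w j) (h : ∑ j ∈ s, w j * f j = 0) : 0 ≤ s.sup' hs f := by
  obtain ⟨j, hj, hwf⟩ := exists_le_of_sum_le (f := 0) (g := fun j => w j * f j) hs (by simp [h])
  exact le_sup'_of_le f hj (nonneg_of_mul_nonneg_right hwf (hw j hj))

theorem Finset.sum_sub_mul_le_of_forall_le {κ : Type*} [Fintype κ] (s : Finset κ)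
    {μ ν h : κ → ℝ} {M : ℝ} (hμ : ∀ i, 0 ≤ μ i) (hν : ∀ i, 0 ≤ ν i) (hν1 : ∑ i, ν i = 1)
    (hh : ∀ i, 0 ≤ h i) (hM : ∀ i, h i ≤ M) : ∑ i ∈ s, (ν i - μ i) * h i ≤ M :=
  calc ∑ i ∈ s, (ν i - μ i) * h i ≤ ∑ i ∈ s, ν i * M := by
        refine sum_le_sum fun i _ => ?_
        exact (mul_le_mul_of_nonneg_right (by linarith [hμ i]) (hh i)).trans
          (mul_le_mul_of_nonneg_left (hM i) (hν i))
    _ ≤ ∑ i, ν i * M := sum_le_univ_sum_of_nonneg fun i => mul_nonneg (hν i) ((hh i).trans (hM i))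
    _ = M := by rw [← sum_mul, hν1, one_mul]

section

variable {ι : Type*} [Fintype ι] [LinearOrder ι] [LocallyFiniteOrderBot ι]

theorem sum_sub_mul_sub_ite_le {μ ν : ι → ℝ} (hμν : ∑ i, μ i = ∑ i, ν i) (h : ι → ℝ) (j : ι) :
    ∑ i, (μ i - ν i) * (h j - if i ≤ j then h i else 0) = ∑ i ∈ Iic j, (ν i - μ i) * h i := by
  have hconst : ∑ i, (μ i - ν i) * h j = 0 := by
    rw [← sum_mul, sum_sub_distrib, hμν, sub_self, zero_mul]
  simp_rw [mul_sub, sum_sub_distrib, hconst, zero_sub, mul_ite, mul_zero, ← sum_filter,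
    filter_ge_eq_Iic, ← sum_neg_distrib, ← neg_mul, neg_sub]

theorem sum_mul_sum_Iic_eq_zero [LocallyFiniteOrderTop ι] {w h d : ι → ℝ} {c : ℝ}
    (hwh : ∀ i, h i * ∑ j ∈ Ici i, w j = c) (hd : ∑ i, d i = 0) :
    ∑ j, w j * ∑ i ∈ Iic j, d i * h i = 0 :=
  calc ∑ j, w j * ∑ i ∈ Iic j, d i * h i = ∑ j, ∑ i ∈ Iic j, w j * (d i * h i) := by
        simp_rw [mul_sum]
    _ = ∑ i, ∑ j ∈ Ici i, w j * (d i * h i) :=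
        sum_comm' fun j i => by simp only [mem_univ, mem_Iic, mem_Ici, true_and, and_true]
    _ = ∑ i, d i * (h i * ∑ j ∈ Ici i, w j) := by
        simp_rw [mul_sum]; exact sum_congr rfl fun i _ => sum_congr rfl fun j _ => by ring
    _ = 0 := by simp_rw [hwh, ← sum_mul, hd, zero_mul]

end

theorem Fin.sum_Ici_sub {n : ℕ} (u : ℕ → ℝ) (i : Fin n) :
    ∑ j ∈ Ici i, (u j - u (j + 1)) = u i - u n := by
  rw [← Fin.valEmbedding_apply, ← sum_map (Ici i) Fin.valEmbedding (fun k => u k - u (k + 1)),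
    Fin.map_valEmbedding_Ici]
  simpa [neg_add_eq_sub] using sum_Ico_sub (fun k => -u k) i.isLt.le

/-- `2 ^ n` times the stationary probability of the states `≥ k` of the winning streak chain. -/
def streakTail (n k : ℕ) : ℝ := if k < n then 2 ^ (n - k) else 0

theorem streakTail_sub_succ_pos {n k : ℕ} (hk : k < n) :
    0 < streakTail n k - streakTail n (k + 1) := by
  unfold streakTail
  rw [if_pos hk]
  split_ifs with hk'
  · rw [show n - k = n - (k + 1) + 1 by omega, pow_succ]
    linarith [pow_pos (two_pos (α := ℝ)) (n - (k + 1))]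
  · simp

theorem pow_mul_sum_Ici_streakTail_sub {n : ℕ} (i : Fin n) :
    (2 : ℝ) ^ ((i : ℕ) + 1) * ∑ j ∈ Ici i, (streakTail n j - streakTail n (j + 1)) =
      2 ^ (n + 1) := by
  rw [Fin.sum_Ici_sub, streakTail, streakTail, if_pos i.isLt, if_neg (lt_irrefl n), sub_zero,
    ← pow_add]
  congr 1
  omega

/-- For the winning streak Markov chain on `{1,…,n}` (state `k : Fin n`
represents the integer `k+1`), whose mean hitting times are `E_i[τ_j] = 2^j − 2^i`
for `i < j` and `E_i[τ_j] = 2^j` for `i > j`, the access time satisfies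
`max{E_ν[2^Z] − E_μ[2^Z], 0} ≤ H(μ,ν) ≤ 2^n`. -/
theorem winning_streak_access_time_bounds
    (n : ℕ) (hn : 0 < n)
    (ET : Fin n → Fin n → ℝ)
    (hET : ∀ i j : Fin n, ET i j =
      if (i : ℕ) < (j : ℕ) then 2 ^ ((j : ℕ) + 1) - 2 ^ ((i : ℕ) + 1)
      else if (j : ℕ) < (i : ℕ) then 2 ^ ((j : ℕ) + 1)
      else 0)
    (μ ν : Fin n → ℝ)
    (hμ0 : ∀ i, 0 ≤ μ i) (hμ1 : ∑ i, μ i = 1)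
    (hν0 : ∀ i, 0 ≤ ν i) (hν1 : ∑ i, ν i = 1) :
    max ((∑ i, ν i * (2 : ℝ) ^ ((i : ℕ) + 1)) - ∑ i, μ i * (2 : ℝ) ^ ((i : ℕ) + 1)) 0
      ≤ univ.sup' ⟨⟨0, hn⟩, mem_univ _⟩ (fun j => ∑ i, (μ i - ν i) * ET i j) ∧
    univ.sup' ⟨⟨0, hn⟩, mem_univ _⟩ (fun j => ∑ i, (μ i - ν i) * ET i j)
      ≤ 2 ^ n := by
  have hET' : ∀ i j, ET i j = 2 ^ ((j : ℕ) + 1) - if i ≤ j then 2 ^ ((i : ℕ) + 1) else 0 := by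
    intro i j
    rcases lt_trichotomy (i : ℕ) j with h | h | h
    · simp [hET, Fin.le_def, h, h.le]
    · simp [hET, Fin.ext h]
    · simp [hET, Fin.le_def, h, h.not_gt, h.not_ge]
  have hpartial : (fun j => ∑ i, (μ i - ν i) * ET i j)
      = fun j => ∑ i ∈ Iic j, (ν i - μ i) * 2 ^ ((i : ℕ) + 1) := by
    funext j
    simp_rw [hET']
    exact sum_sub_mul_sub_ite_le (hμ1.trans hν1.symm) (fun k => 2 ^ ((k : ℕ) + 1)) j
  rw [hpartial]
  refine ⟨max_le ?_ ?_, sup'_le _ _ fun j _ => ?_⟩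
  · have : NeZero n := ⟨hn.ne'⟩
    refine le_sup'_of_le _ (mem_univ ⊤) (le_of_eq ?_)
    rw [Iic_top, ← sum_sub_distrib]
    simp_rw [sub_mul]
  · refine sup'_nonneg_of_sum_mul_eq_zero _ (fun j _ => streakTail_sub_succ_pos j.isLt)
      (sum_mul_sum_Iic_eq_zero pow_mul_sum_Ici_streakTail_sub ?_)
    rw [sum_sub_distrib, hμ1, hν1, sub_self]
  · exact sum_sub_mul_le_of_forall_le _ hμ0 hν0 hν1 (fun i => by positivity)
      (fun i => pow_le_pow_right₀ one_le_two i.isLt)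
end

section
/- For the winning streak Markov chain on {1,…,n} with n > 1, taking μ = δ_1 (the Dirac mass at 1) and ν with ν_i = 1/(2(n−1)) for 1 ≤ i ≤ n−1 and ν_n = 1/2, the access time equals H(μ,ν) = (2^{n−1} − 1)/(n−1) + 2^{n−1} − 2; in particular the worst-case access time of the winning streak chain grows like 2^n. -/
open Finset

/-!
Writing `E_i[τ_j] = 2^j - [i ≤ j] 2^i`, the term `2^j` is independent of `i` and cancels against
`∑ (μ_i - ν_i) = 0`, so the access-time objective at `j` is `-∑_{i ≤ j} (μ_i - ν_i) 2^i`. For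
`μ = δ_1` every increment `-(μ_j - ν_j) 2^j`, `j ≥ 2`, is nonnegative, so the maximum is attained
at `j = n`, where the objective is `∑_i ν_i 2^i - 2`.
-/

namespace WinningStreak

/-- `hittingTime i j = E_{i+1}[τ_{j+1}]`: state `k : ℕ` stands for `k + 1`. -/
def hittingTime (i j : ℕ) : ℝ :=
  if i < j then 2 ^ (j + 1) - 2 ^ (i + 1) else if j < i then 2 ^ (j + 1) else 0

noncomputable def accessTime {m : ℕ} (μ ν : Fin (m + 1) → ℝ) : ℝ :=
  univ.sup' univ_nonempty fun j : Fin (m + 1) => ∑ i, (μ i - ν i) * hittingTime i j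

lemma hittingTime_eq (i j : ℕ) :
    hittingTime i j = 2 ^ (j + 1) - if i ≤ j then 2 ^ (i + 1) else 0 := by
  unfold hittingTime
  rcases lt_trichotomy i j with h | rfl | h
  · simp [h, h.le]
  · simp
  · simp [h, h.not_ge, h.not_gt]

lemma sum_mul_hittingTime {n : ℕ} (w : Fin n → ℝ) (hw : ∑ i, w i = 0) (j : Fin n) :
    ∑ i, w i * hittingTime (i : ℕ) j = -∑ i ∈ Iic j, w i * 2 ^ ((i : ℕ) + 1) := by
  simp only [hittingTime_eq, mul_sub, sum_sub_distrib, ← sum_mul, hw, zero_mul, zero_sub,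
    mul_ite, mul_zero, Fin.val_fin_le, ← sum_filter, filter_ge_eq_Iic]

lemma sum_mul_hittingTime_le_last {m : ℕ} (w : Fin (m + 1) → ℝ) (hw : ∑ i, w i = 0)
    (hw_nonpos : ∀ i, i ≠ 0 → w i ≤ 0) (j : Fin (m + 1)) :
    ∑ i, w i * hittingTime i j ≤ ∑ i, w i * hittingTime i (Fin.last m) := by
  rw [sum_mul_hittingTime w hw, sum_mul_hittingTime w hw, neg_le_neg_iff]
  refine sum_le_sum_of_subset_of_nonpos' (Iic_subset_Iic.mpr (Fin.le_last j)) fun i _ hij => ?_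
  have hi : i ≠ 0 := fun h => hij (by simp [h])
  exact mul_nonpos_of_nonpos_of_nonneg (hw_nonpos i hi) (by positivity)

theorem accessTime_single_zero {m : ℕ} (ν : Fin (m + 1) → ℝ) (hν : ∀ i, 0 ≤ ν i)
    (hν_sum : ∑ i, ν i = 1) :
    accessTime (Pi.single 0 1) ν = ∑ i, ν i * 2 ^ ((i : ℕ) + 1) - 2 := by
  set w : Fin (m + 1) → ℝ := fun i => (Pi.single 0 1 : Fin (m + 1) → ℝ) i - ν i
  have hw : ∑ i, w i = 0 := by simp [w, sum_sub_distrib, hν_sum]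
  have hw_nonpos : ∀ i, i ≠ 0 → w i ≤ 0 := fun i hi => by simp [w, hi, hν i]
  have h_attained : accessTime (Pi.single 0 1) ν = ∑ i, w i * hittingTime i (Fin.last m) :=
    le_antisymm (sup'_le _ _ fun j _ => sum_mul_hittingTime_le_last w hw hw_nonpos j)
      (le_sup' (fun j : Fin (m + 1) => ∑ i, w i * hittingTime i j) (mem_univ _))
  rw [h_attained, sum_mul_hittingTime w hw, ← Fin.top_eq_last, Iic_top]
  simp [w, sub_mul, sum_sub_distrib, Pi.single_apply]

lemma sum_two_pow_succ (m : ℕ) : ∑ i : Fin m, (2 : ℝ) ^ ((i : ℕ) + 1) = 2 ^ (m + 1) - 2 := by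
  have h := geom_sum_mul (2 : ℝ) m
  rw [Fin.sum_univ_eq_sum_range (fun i => (2 : ℝ) ^ (i + 1))]
  simp only [pow_succ, ← sum_mul] at h ⊢
  linarith

end WinningStreak

open WinningStreak

/-- For the winning streak Markov chain on `{1,…,n}` with `n > 1`
(state `k : Fin n` represents the integer `k+1`), with `μ = δ_1` and
`ν_i = 1/(2(n−1))` for `1 ≤ i ≤ n−1`, `ν_n = 1/2`, the access time equals
`H(μ,ν) = (2^{n−1} − 1)/(n−1) + 2^{n−1} − 2`, which is of order `2^n`. -/
theorem winning_streak_access_time_example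
    (n : ℕ) (hn : 1 < n)
    (ET : Fin n → Fin n → ℝ)
    (hET : ∀ i j : Fin n, ET i j =
      if (i : ℕ) < (j : ℕ) then 2 ^ ((j : ℕ) + 1) - 2 ^ ((i : ℕ) + 1)
      else if (j : ℕ) < (i : ℕ) then 2 ^ ((j : ℕ) + 1)
      else 0)
    (μ ν : Fin n → ℝ)
    (hμ : ∀ i : Fin n, μ i = if (i : ℕ) = 0 then 1 else 0)
    (hν : ∀ i : Fin n, ν i =
      if (i : ℕ) = n - 1 then 1 / 2 else 1 / (2 * ((n : ℝ) - 1))) :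
    univ.sup' ⟨⟨0, Nat.lt_of_lt_of_le Nat.one_pos hn.le⟩, mem_univ _⟩
        (fun j => ∑ i, (μ i - ν i) * ET i j)
      = ((2 : ℝ) ^ (n - 1) - 1) / ((n : ℝ) - 1) + 2 ^ (n - 1) - 2 := by
  obtain ⟨m, rfl⟩ : ∃ m, n = m + 1 := ⟨n - 1, by omega⟩
  obtain rfl : ET = fun i j : Fin (m + 1) => hittingTime i j := funext fun i => funext (hET i)
  obtain rfl : μ = Pi.single 0 1 := funext fun i => by
    simp only [hμ, Pi.single_apply, Fin.ext_iff, Fin.val_zero]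
  have hm : (m : ℝ) ≠ 0 := by exact_mod_cast (by omega : m ≠ 0)
  have hν_last : ν (Fin.last m) = 1 / 2 := by simp [hν]
  have hν_castSucc (i : Fin m) : ν i.castSucc = 1 / (2 * m) := by
    rw [hν]
    simp [i.isLt.ne]
  have hν_nonneg : ∀ i, 0 ≤ ν i :=
    Fin.lastCases (by rw [hν_last]; norm_num) fun i => by rw [hν_castSucc]; positivity
  have hν_sum : ∑ i, ν i = 1 := by
    simp only [Fin.sum_univ_castSucc, hν_castSucc, hν_last, sum_const, card_univ,
      Fintype.card_fin, nsmul_eq_mul]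
    field_simp
    norm_num
  change accessTime _ ν = _
  rw [accessTime_single_zero ν hν_nonneg hν_sum, Fin.sum_univ_castSucc]
  simp only [hν_castSucc, hν_last, ← mul_sum, Fin.val_castSucc, sum_two_pow_succ, Fin.val_last]
  push_cast [add_sub_cancel_right]
  field_simp
  ring
end

section
/- For the simple random walk on a connected graph G = (V,E) with n := |V| vertices, the access time satisfies H(μ,ν) ≤ n(n−1)² for all probability distributions μ, ν on V. -/
open Finset

/-!
Hitting times are nonnegative and satisfy the triangle inequality `E_i τ_j ≤ E_i τ_k + E_k τ_j`,
both by the minimum principle for superharmonic functions on a connected graph. Summing the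
first-step equations for `E_· τ_j` over all vertices and using the handshake identity gives
`Σ_{k ∼ j} E_k τ_j = Σ_i deg i - deg j`, so `E_k τ_j ≤ n(n-1)` along every edge. Chaining along a
path of length at most `n - 1` bounds every hitting time by `n(n-1)²`, and the access time
`Σ_i (μ_i - ν_i) E_i τ_j` is at most `Σ_i μ_i E_i τ_j`.
-/

theorem Finset.sum_sub_mul_le_of_le {ι : Type*} [Fintype ι] {μ ν f : ι → ℝ} {C : ℝ}
    (hμ0 : ∀ i, 0 ≤ μ i) (hμ1 : ∑ i, μ i = 1) (hν0 : ∀ i, 0 ≤ ν i) (hf0 : ∀ i, 0 ≤ f i)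
    (hfC : ∀ i, f i ≤ C) : ∑ i, (μ i - ν i) * f i ≤ C :=
  calc ∑ i, (μ i - ν i) * f i = ∑ i, μ i * f i - ∑ i, ν i * f i := by
        simp only [sub_mul, sum_sub_distrib]
    _ ≤ ∑ i, μ i * C :=
        sub_le_iff_le_add.2 <| le_add_of_le_of_nonneg
          (sum_le_sum fun i _ => mul_le_mul_of_nonneg_left (hfC i) (hμ0 i))
          (sum_nonneg fun i _ => mul_nonneg (hν0 i) (hf0 i))
    _ = C := by rw [← sum_mul, hμ1, one_mul]

namespace SimpleGraph

variable {V : Type*} [Fintype V] {G : SimpleGraph V} [DecidableRel G.Adj]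

theorem sum_sum_neighborFinset {M : Type*} [AddCommMonoid M] (f : V → M) :
    ∑ i, ∑ k ∈ G.neighborFinset i, f k = ∑ k, G.degree k • f k := by
  rw [sum_comm' (t' := univ) (s' := fun k => G.neighborFinset k) fun i k => by simp [adj_comm]]
  simp [card_neighborFinset_eq_degree]

theorem sum_degree_le_card_mul_card_sub_one :
    ∑ i, (G.degree i : ℝ) ≤ Fintype.card V * (Fintype.card V - 1) :=
  calc ∑ i, (G.degree i : ℝ) ≤ ∑ _i : V, ((Fintype.card V : ℝ) - 1) :=
        sum_le_sum fun i _ => by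
          rw [le_sub_iff_add_le]; exact_mod_cast G.degree_lt_card_verts i
    _ = Fintype.card V * (Fintype.card V - 1) := by simp [mul_sub]

theorem sum_transition_mul {P : V → V → ℝ}
    (hP : ∀ i j, P i j = if G.Adj i j then 1 / (G.degree i : ℝ) else 0) (f : V → ℝ) (i : V) :
    ∑ k, P i k * f k = (∑ k ∈ G.neighborFinset i, f k) / G.degree i := by
  simp only [hP, neighborFinset_eq_filter, sum_filter, sum_div, ite_mul, ite_div, zero_mul,
    zero_div, one_div, inv_mul_eq_div]

theorem eq_of_adj_of_isMin_of_superharmonic {f : V → ℝ} {u v : V} (hmin : ∀ y, f u ≤ f y)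
    (hu : ∑ k ∈ G.neighborFinset u, f k ≤ G.degree u * f u) (huv : G.Adj u v) : f v = f u := by
  have hnonneg : ∀ k ∈ G.neighborFinset u, 0 ≤ f k - f u := fun k _ => sub_nonneg.2 (hmin k)
  have hsum : ∑ k ∈ G.neighborFinset u, (f k - f u) = 0 := by
    refine le_antisymm ?_ (sum_nonneg hnonneg)
    rw [sum_sub_distrib, sum_const, card_neighborFinset_eq_degree, nsmul_eq_mul]
    linarith
  have := (sum_eq_zero_iff_of_nonneg hnonneg).1 hsum v ((G.mem_neighborFinset u v).2 huv)
  linarith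

theorem Connected.nonneg_of_superharmonic (hG : G.Connected) {B : Set V} {b : V} (hb : b ∈ B)
    {f : V → ℝ} (hfB : ∀ x ∈ B, 0 ≤ f x)
    (hf : ∀ x ∉ B, ∑ k ∈ G.neighborFinset x, f k ≤ G.degree x * f x) (x : V) : 0 ≤ f x := by
  have : Nonempty V := ⟨b⟩
  obtain ⟨x₀, hx₀⟩ := Finite.exists_min f
  -- The minimum propagates along a walk from `x₀` until the walk enters `B`.
  suffices key : ∀ u w (_ : G.Walk u w), w ∈ B → f u = f x₀ → 0 ≤ f x₀ from
    (key x₀ b (hG.preconnected x₀ b).some hb rfl).trans (hx₀ x)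
  intro u w p hw hu
  induction p with
  | nil => exact hu ▸ hfB _ hw
  | @cons u v w huv _ ih =>
    by_cases huB : u ∈ B
    · exact hu ▸ hfB u huB
    · exact ih hw <| (eq_of_adj_of_isMin_of_superharmonic (hu ▸ hx₀) (hf u huB) huv).trans hu

variable (G) in
/-- The first-step equations `h i j = 1 + Σ_{k ∼ i} h k j / deg i` for the mean hitting times
`h i j = E_i[τ_j]`, multiplied through by `deg i`. -/
structure IsMeanHittingTime (h : V → V → ℝ) : Prop where
  self_eq_zero : ∀ j, h j j = 0
  degree_mul_eq : ∀ i j, i ≠ j →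
    G.degree i * h i j = G.degree i + ∑ k ∈ G.neighborFinset i, h k j

namespace IsMeanHittingTime

variable {h : V → V → ℝ}

theorem of_transition {P : V → V → ℝ}
    (hP : ∀ i j, P i j = if G.Adj i j then 1 / (G.degree i : ℝ) else 0)
    (hdiag : ∀ j, h j j = 0) (hstep : ∀ i j, i ≠ j → h i j = 1 + ∑ k, P i k * h k j) :
    G.IsMeanHittingTime h where
  self_eq_zero := hdiag
  degree_mul_eq i j hij := by
    rw [hstep i j hij, sum_transition_mul hP, mul_add, mul_one]
    by_cases hd : G.degree i = 0
    · rw [← card_neighborFinset_eq_degree, card_eq_zero] at hd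
      simp [hd]
    · field_simp

variable (hh : G.IsMeanHittingTime h)
include hh

theorem nonneg (hG : G.Connected) (i j : V) : 0 ≤ h i j :=
  hG.nonneg_of_superharmonic (B := {j}) (f := fun x => h x j) rfl (by simp [hh.self_eq_zero])
    (fun x hx => by
      rw [hh.degree_mul_eq x j hx]
      exact le_add_of_nonneg_left (Nat.cast_nonneg _)) i

theorem sum_neighborFinset (j : V) :
    ∑ k ∈ G.neighborFinset j, h k j = ∑ i, (G.degree i : ℝ) - G.degree j := by
  set g : V → ℝ := fun i => G.degree i * h i j - G.degree i - ∑ k ∈ G.neighborFinset i, h k j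
  have hsum : ∑ i, g i = -∑ i, (G.degree i : ℝ) := by
    simp only [g, sum_sub_distrib, sum_sum_neighborFinset, nsmul_eq_mul]
    ring
  have hsingle : ∑ i, g i = g j :=
    sum_eq_single j (fun i _ hij => by simp [g, hh.degree_mul_eq i j hij]) (by simp)
  simp only [hsingle, g, hh.self_eq_zero, mul_zero] at hsum
  linarith

theorem le_sum_degree_of_adj (hG : G.Connected) {i j : V} (hij : G.Adj i j) :
    h i j ≤ ∑ k, (G.degree k : ℝ) := by
  have := single_le_sum (fun k _ => hh.nonneg hG k j) ((G.mem_neighborFinset j i).2 hij.symm)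
  rw [hh.sum_neighborFinset] at this
  linarith [(G.degree j).cast_nonneg (α := ℝ)]

theorem le_add (hG : G.Connected) (i k j : V) : h i j ≤ h i k + h k j := by
  have := hG.nonneg_of_superharmonic (B := {k, j}) (f := fun x => h x k + h k j - h x j)
    (Set.mem_insert k _) ?_ ?_ i
  · linarith
  · rintro x (rfl | rfl)
    · simp [hh.self_eq_zero]
    · simpa [hh.self_eq_zero] using add_nonneg (hh.nonneg hG _ _) (hh.nonneg hG _ _)
  · intro x hx
    simp only [Set.mem_insert_iff, Set.mem_singleton_iff, not_or] at hx
    simp only [sum_sub_distrib, sum_add_distrib, sum_const, card_neighborFinset_eq_degree,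
      nsmul_eq_mul]
    linarith [hh.degree_mul_eq x k hx.1, hh.degree_mul_eq x j hx.2]

theorem le_length_mul (hG : G.Connected) {i j : V} (p : G.Walk i j) :
    h i j ≤ p.length * ∑ k, (G.degree k : ℝ) := by
  induction p with
  | nil => simp [hh.self_eq_zero]
  | @cons u v w huv _ ih =>
    rw [Walk.length_cons, Nat.cast_succ, add_mul, one_mul]
    linarith [hh.le_add hG u v w, hh.le_sum_degree_of_adj hG huv]

theorem le_card_mul_card_sub_one_sq (hG : G.Connected) (i j : V) :
    h i j ≤ Fintype.card V * (Fintype.card V - 1) ^ 2 := by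
  obtain ⟨p, hp, -⟩ := hG.exists_path_of_dist i j
  have hlen : (p.length : ℝ) ≤ Fintype.card V - 1 := by
    rw [le_sub_iff_add_le]; exact_mod_cast hp.length_lt
  calc h i j ≤ p.length * ∑ k, (G.degree k : ℝ) := hh.le_length_mul hG p
    _ ≤ (Fintype.card V - 1) * (Fintype.card V * (Fintype.card V - 1)) :=
        mul_le_mul hlen sum_degree_le_card_mul_card_sub_one
          (sum_nonneg fun _ _ => Nat.cast_nonneg _) ((Nat.cast_nonneg _).trans hlen)
    _ = Fintype.card V * (Fintype.card V - 1) ^ 2 := by ring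

end IsMeanHittingTime

end SimpleGraph

theorem rw_connected_graph_access_time_bound_general
    {V : Type*} [Fintype V] [Nonempty V]
    (G : SimpleGraph V) [DecidableRel G.Adj] (hG : G.Connected)
    (P : V → V → ℝ)
    (hP : ∀ i j, P i j = if G.Adj i j then 1 / (G.degree i : ℝ) else 0)
    (ET : V → V → ℝ)
    (hET_diag : ∀ j, ET j j = 0)
    (hET_step : ∀ i j, i ≠ j → ET i j = 1 + ∑ k, P i k * ET k j)
    (μ ν : V → ℝ)
    (hμ0 : ∀ i, 0 ≤ μ i) (hμ1 : ∑ i, μ i = 1)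
    (hν0 : ∀ i, 0 ≤ ν i) :
    univ.sup' univ_nonempty (fun j => ∑ i, (μ i - ν i) * ET i j)
      ≤ (Fintype.card V : ℝ) * ((Fintype.card V : ℝ) - 1) ^ 2 := by
  have hET : G.IsMeanHittingTime ET := .of_transition hP hET_diag hET_step
  exact sup'_le _ _ fun j _ => sum_sub_mul_le_of_le hμ0 hμ1 hν0 (fun i => hET.nonneg hG i j)
    fun i => hET.le_card_mul_card_sub_one_sq hG i j

/-- For the simple random walk on a connected graph `G` on `n` vertices
(with transition probabilities `1/deg i` to each neighbor and mean hitting times `ET`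
characterized by the first-step equations), the access time
`H(μ,ν) = max_j Σ_i (μ_i − ν_i) E_i[τ_j]` satisfies `H(μ,ν) ≤ n(n−1)²`. -/
theorem rw_connected_graph_access_time_bound
    {V : Type*} [Fintype V] [DecidableEq V] [Nonempty V]
    (G : SimpleGraph V) [DecidableRel G.Adj] (hG : G.Connected)
    (P : V → V → ℝ)
    (hP : ∀ i j, P i j = if G.Adj i j then 1 / (G.degree i : ℝ) else 0)
    (ET : V → V → ℝ)
    (hET_diag : ∀ j, ET j j = 0)
    (hET_step : ∀ i j, i ≠ j → ET i j = 1 + ∑ k, P i k * ET k j)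
    (μ ν : V → ℝ)
    (hμ0 : ∀ i, 0 ≤ μ i) (hμ1 : ∑ i, μ i = 1)
    (hν0 : ∀ i, 0 ≤ ν i) (hν1 : ∑ i, ν i = 1) :
    univ.sup' univ_nonempty (fun j => ∑ i, (μ i - ν i) * ET i j)
      ≤ (Fintype.card V : ℝ) * ((Fintype.card V : ℝ) - 1) ^ 2 :=
  rw_connected_graph_access_time_bound_general G hG P hP ET hET_diag hET_step μ ν hμ0 hμ1 hν0
end

section
/- Let X be the simple random walk on a connected graph G = (V,E) with stationary distribution π and symmetric hitting times, i.e. E_i[τ_j] = E_j[τ_i] for all i, j ∈ V. Then the access time from π to any distribution ν satisfies H(π,ν) = t_av − min_{j ∈ V} Σ_{i ∈ V} ν_i E_i[τ_j], and in particular H(π,ν) ≤ t_av. -/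
/-!
Averaging the first-step equations for hitting times against a stationary distribution `π`
gives Kac's formula `π j * E_j[τ_j⁺] = 1`. Feeding this back into the first-step equations shows
that the random-target function `i ↦ ∑ j, π j * E_i[τ_j]` is harmonic, hence constant on a
connected graph by the maximum principle; averaging once more, the constant is `t_av`. When
hitting times are symmetric this says `∑ i, π i * E_i[τ_j] = t_av` for every `j`, so the
`j`-th term of `H(π, ν)` is `t_av - ∑ i, ν i * E_i[τ_j]`; the bound holds because hitting
times are nonnegative.
-/

open Finset Matrix

theorem Finset.sup'_const_sub {ι α : Type*} [AddCommGroup α] [LinearOrder α]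
    [IsOrderedAddMonoid α] {s : Finset ι} (hs : s.Nonempty) (c : α) (f : ι → α) :
    s.sup' hs (fun i => c - f i) = c - s.inf' hs f := by
  obtain ⟨i, hi, hfi⟩ := s.exists_mem_eq_inf' hs f
  refine le_antisymm (sup'_le _ _ fun j hj => sub_le_sub_left (inf'_le f hj) c) ?_
  exact hfi ▸ le_sup' (fun i => c - f i) hi

section HittingTimes

variable {V : Type*} [Fintype V] [DecidableEq V] {P : Matrix V V ℝ} {ET : V → V → ℝ}
  {π : V → ℝ}

def meanReturnTime (P : Matrix V V ℝ) (ET : V → V → ℝ) (j : V) : ℝ := 1 + ∑ k, P j k * ET k j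

theorem hitting_add_ite_meanReturnTime (hET_diag : ∀ j, ET j j = 0)
    (hET_step : ∀ i j, i ≠ j → ET i j = 1 + ∑ k, P i k * ET k j) (i j : V) :
    ET i j + (if i = j then meanReturnTime P ET j else 0) = 1 + ∑ k, P i k * ET k j := by
  by_cases h : i = j
  · subst h
    simp [hET_diag, meanReturnTime]
  · simp [h, hET_step i j h]

theorem hitting_nonneg (hP : P ∈ rowStochastic ℝ V) (hET_diag : ∀ j, ET j j = 0)
    (hET_step : ∀ i j, i ≠ j → ET i j = 1 + ∑ k, P i k * ET k j) (i j : V) : 0 ≤ ET i j := by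
  obtain ⟨i₀, -, hmin⟩ := exists_min_image univ (ET · j) ⟨i, mem_univ i⟩
  suffices i₀ = j by
    subst this
    simpa [hET_diag] using hmin i (mem_univ i)
  by_contra hne
  have : ET i₀ j + 1 ≤ ET i₀ j := calc
    ET i₀ j + 1 = ∑ k, P i₀ k * ET i₀ j + 1 := by
      rw [← sum_mul, sum_row_of_mem_rowStochastic hP, one_mul]
    _ ≤ ∑ k, P i₀ k * ET k j + 1 := by
      gcongr with k
      exacts [nonneg_of_mem_rowStochastic hP, hmin k (mem_univ k)]
    _ = ET i₀ j := by rw [hET_step i₀ j hne, add_comm]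
  linarith

theorem stationary_mul_meanReturnTime (hπP : π ᵥ* P = π) (hπ_sum : ∑ i, π i = 1)
    (hET_diag : ∀ j, ET j j = 0)
    (hET_step : ∀ i j, i ≠ j → ET i j = 1 + ∑ k, P i k * ET k j) (j : V) :
    π j * meanReturnTime P ET j = 1 := by
  have h := congr(∑ i, π i *
    $(funext fun i => hitting_add_ite_meanReturnTime hET_diag hET_step i j) i)
  have hπP' (k : V) : ∑ i, π i * P i k = π k := congrFun hπP k
  simp only [mul_add, mul_ite, mul_zero, sum_add_distrib, sum_ite_eq', mem_univ, if_true,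
    mul_one, hπ_sum, mul_sum] at h
  rw [sum_comm] at h
  simp only [← mul_assoc, ← sum_mul, hπP'] at h
  linarith

theorem mulVec_sum_stationary_mul_hitting (hπP : π ᵥ* P = π) (hπ_sum : ∑ i, π i = 1)
    (hET_diag : ∀ j, ET j j = 0)
    (hET_step : ∀ i j, i ≠ j → ET i j = 1 + ∑ k, P i k * ET k j) :
    P *ᵥ (fun i => ∑ j, π j * ET i j) = fun i => ∑ j, π j * ET i j := by
  funext i
  have h := congr(∑ j, π j *
    $(funext fun j => hitting_add_ite_meanReturnTime hET_diag hET_step i j) j)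
  simp only [mul_add, mul_ite, mul_zero, sum_add_distrib, sum_ite_eq, mem_univ, if_true, mul_one,
    hπ_sum, stationary_mul_meanReturnTime hπP hπ_sum hET_diag hET_step, mul_sum,
    mul_left_comm (π _)] at h
  rw [sum_comm] at h
  simp only [mulVec, dotProduct, mul_sum]
  linarith

theorem SimpleGraph.Preconnected.eq_of_mulVec_eq_self {G : SimpleGraph V} (hG : G.Preconnected)
    (hP : P ∈ rowStochastic ℝ V) (hP_adj : ∀ i j, G.Adj i j → 0 < P i j) {f : V → ℝ}
    (hf : P *ᵥ f = f) (i j : V) : f i = f j := by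
  obtain ⟨i₀, -, hmax⟩ := exists_max_image univ f ⟨i, mem_univ i⟩
  have hstep {a b : V} (hab : G.Adj a b) (ha : f a = f i₀) : f b = f i₀ := by
    -- the nonnegative defects `f i₀ - f k` average to `0` under the row `P a`
    have hsum : ∑ k, P a k * (f i₀ - f k) = 0 := by
      simp only [mul_sub, sum_sub_distrib, ← sum_mul, sum_row_of_mem_rowStochastic hP, one_mul]
      rw [← ha]
      exact sub_eq_zero.2 (congrFun hf a).symm
    have := (sum_eq_zero_iff_of_nonneg fun k _ => mul_nonneg (nonneg_of_mem_rowStochastic hP)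
      (sub_nonneg.2 (hmax k (mem_univ k)))).1 hsum b (mem_univ b)
    linarith [(mul_eq_zero.1 this).resolve_left (hP_adj a b hab).ne']
  have hwalk {a b : V} (w : G.Walk a b) : f a = f i₀ → f b = f i₀ := by
    induction w with
    | nil => exact id
    | cons hab _ ih => exact fun ha => ih (hstep hab ha)
  obtain ⟨wi⟩ := hG i₀ i
  obtain ⟨wj⟩ := hG i₀ j
  rw [hwalk wi rfl, hwalk wj rfl]

theorem SimpleGraph.Preconnected.sum_stationary_mul_hitting_eq {G : SimpleGraph V}
    (hG : G.Preconnected) (hP : P ∈ rowStochastic ℝ V) (hP_adj : ∀ i j, G.Adj i j → 0 < P i j)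
    (hπP : π ᵥ* P = π) (hπ_sum : ∑ i, π i = 1) (hET_diag : ∀ j, ET j j = 0)
    (hET_step : ∀ i j, i ≠ j → ET i j = 1 + ∑ k, P i k * ET k j) (i : V) :
    ∑ j, π j * ET i j = ∑ i', ∑ j, π i' * π j * ET i' j := by
  have hconst := hG.eq_of_mulVec_eq_self hP hP_adj
    (mulVec_sum_stationary_mul_hitting hπP hπ_sum hET_diag hET_step)
  calc ∑ j, π j * ET i j = ∑ i', π i' * ∑ j, π j * ET i j := by rw [← sum_mul, hπ_sum, one_mul]
    _ = ∑ i', π i' * ∑ j, π j * ET i' j := sum_congr rfl fun i' _ => by rw [hconst i i']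
    _ = ∑ i', ∑ j, π i' * π j * ET i' j := by simp only [mul_assoc, mul_sum]

end HittingTimes

namespace SimpleGraph

variable {V : Type*} [Fintype V] (G : SimpleGraph V) [DecidableRel G.Adj]

noncomputable def randomWalk : Matrix V V ℝ :=
  fun i j => if G.Adj i j then 1 / (G.degree i : ℝ) else 0

noncomputable def degreeDistribution [DecidableEq V] (i : V) : ℝ :=
  G.degree i / (2 * (#G.edgeFinset : ℝ))

variable {G}

theorem randomWalk_pos_of_adj {i j : V} (h : G.Adj i j) : 0 < G.randomWalk i j := by
  have := h.degree_pos_left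
  simp only [randomWalk, if_pos h]
  positivity

theorem randomWalk_mem_rowStochastic [DecidableEq V] (hdeg : ∀ v, 0 < G.degree v) :
    G.randomWalk ∈ rowStochastic ℝ V := by
  refine mem_rowStochastic_iff_sum.2 ⟨fun i j => ?_, fun i => ?_⟩
  · unfold randomWalk
    split_ifs <;> positivity
  · have : (G.degree i : ℝ) ≠ 0 := by exact_mod_cast (hdeg i).ne'
    simp only [randomWalk]
    rw [← sum_filter, ← neighborFinset_eq_filter, sum_const,
      card_neighborFinset_eq_degree, nsmul_eq_mul, mul_one_div_cancel this]

variable [DecidableEq V]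

theorem degreeDistribution_vecMul_randomWalk :
    G.degreeDistribution ᵥ* G.randomWalk = G.degreeDistribution := by
  funext j
  have h (i : V) : G.degreeDistribution i * G.randomWalk i j =
      if G.Adj j i then 1 / (2 * (#G.edgeFinset : ℝ)) else 0 := by
    by_cases hij : G.Adj i j
    · have : (G.degree i : ℝ) ≠ 0 := by exact_mod_cast hij.degree_pos_left.ne'
      simp only [degreeDistribution, randomWalk, hij, hij.symm, if_true]
      field_simp
    · simp [randomWalk, hij, G.adj_comm j i]
  rw [vecMul, dotProduct, sum_congr rfl fun i _ => h i, ← sum_filter, ← neighborFinset_eq_filter,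
    sum_const, card_neighborFinset_eq_degree, nsmul_eq_mul, mul_one_div, degreeDistribution]

theorem sum_degreeDistribution_eq_one {v : V} (hv : 0 < G.degree v) :
    ∑ i, G.degreeDistribution i = 1 := by
  have hE : 0 < 2 * #G.edgeFinset :=
    G.sum_degrees_eq_twice_card_edges ▸ sum_pos' (fun i _ => Nat.zero_le _) ⟨v, mem_univ v, hv⟩
  simp only [degreeDistribution]
  rw [← sum_div, div_eq_one_iff_eq (by exact_mod_cast hE.ne')]
  exact_mod_cast G.sum_degrees_eq_twice_card_edges

namespace Connected

variable {ET : V → V → ℝ}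

theorem hitting_nonneg (hG : G.Connected) (hET_diag : ∀ j, ET j j = 0)
    (hET_step : ∀ i j, i ≠ j → ET i j = 1 + ∑ k, G.randomWalk i k * ET k j) (i j : V) :
    0 ≤ ET i j := by
  -- on a single vertex `randomWalk` is the zero matrix, not a stochastic one
  rcases subsingleton_or_nontrivial V with hV | hV
  · exact Subsingleton.elim j i ▸ (hET_diag j).ge
  · exact _root_.hitting_nonneg
      (randomWalk_mem_rowStochastic fun v => hG.preconnected.degree_pos_of_nontrivial v)
      hET_diag hET_step i j

theorem sum_degreeDistribution_mul_hitting_eq (hG : G.Connected) (hET_diag : ∀ j, ET j j = 0)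
    (hET_step : ∀ i j, i ≠ j → ET i j = 1 + ∑ k, G.randomWalk i k * ET k j) (i : V) :
    ∑ j, G.degreeDistribution j * ET i j =
      ∑ i', ∑ j, G.degreeDistribution i' * G.degreeDistribution j * ET i' j := by
  rcases subsingleton_or_nontrivial V with hV | hV
  · simp [Subsingleton.elim _ i, hET_diag]
  · have hdeg (v : V) := hG.preconnected.degree_pos_of_nontrivial v
    exact hG.preconnected.sum_stationary_mul_hitting_eq (randomWalk_mem_rowStochastic hdeg)
      (fun _ _ => randomWalk_pos_of_adj) degreeDistribution_vecMul_randomWalk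
      (sum_degreeDistribution_eq_one (hdeg i)) hET_diag hET_step i

end Connected

end SimpleGraph

theorem rw_symmetric_hitting_access_time_from_stationary_general
    {V : Type*} [Fintype V] [DecidableEq V] [Nonempty V]
    (G : SimpleGraph V) [DecidableRel G.Adj] (hG : G.Connected)
    (P : V → V → ℝ)
    (hP : ∀ i j, P i j = if G.Adj i j then 1 / (G.degree i : ℝ) else 0)
    (ET : V → V → ℝ)
    (hET_diag : ∀ j, ET j j = 0)
    (hET_step : ∀ i j, i ≠ j → ET i j = 1 + ∑ k, P i k * ET k j)
    (hET_sym : ∀ i j, ET i j = ET j i)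
    (π : V → ℝ)
    (hπ : ∀ i, π i = (G.degree i : ℝ) / (2 * (G.edgeFinset.card : ℝ)))
    (tav : ℝ)
    (htav : tav = ∑ i, ∑ j, π i * π j * ET i j)
    (ν : V → ℝ)
    (hν0 : ∀ i, 0 ≤ ν i) :
    univ.sup' univ_nonempty (fun j => ∑ i, (π i - ν i) * ET i j)
      = tav - univ.inf' univ_nonempty (fun j => ∑ i, ν i * ET i j) ∧
    univ.sup' univ_nonempty (fun j => ∑ i, (π i - ν i) * ET i j) ≤ tav := by
  obtain rfl : P = G.randomWalk := funext₂ hP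
  obtain rfl : π = G.degreeDistribution := funext hπ
  have hπ_hitting (j : V) : ∑ i, G.degreeDistribution i * ET i j = tav := by
    rw [htav, ← hG.sum_degreeDistribution_mul_hitting_eq hET_diag hET_step j]
    exact sum_congr rfl fun i _ => by rw [hET_sym]
  have hν_hitting_nonneg : 0 ≤ univ.inf' univ_nonempty (fun j => ∑ i, ν i * ET i j) :=
    le_inf' _ _ fun j _ => sum_nonneg fun i _ =>
      mul_nonneg (hν0 i) (hG.hitting_nonneg hET_diag hET_step i j)
  simp only [sub_mul, sum_sub_distrib, hπ_hitting]
  rw [sup'_const_sub]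
  exact ⟨rfl, sub_le_self tav hν_hitting_nonneg⟩

/-- For the simple random walk on a connected graph `G` with stationary
distribution `π_i = deg i / (2|E|)` and symmetric mean hitting times
(`E_i[τ_j] = E_j[τ_i]`), the access time from `π` to any distribution `ν` satisfies
`H(π,ν) = t_av − min_j Σ_i ν_i E_i[τ_j]`, and in particular `H(π,ν) ≤ t_av`,
where `t_av = Σ_{i,j} π_i π_j E_i[τ_j]`. -/
theorem rw_symmetric_hitting_access_time_from_stationary
    {V : Type*} [Fintype V] [DecidableEq V] [Nonempty V]
    (G : SimpleGraph V) [DecidableRel G.Adj] (hG : G.Connected)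
    (P : V → V → ℝ)
    (hP : ∀ i j, P i j = if G.Adj i j then 1 / (G.degree i : ℝ) else 0)
    (ET : V → V → ℝ)
    (hET_diag : ∀ j, ET j j = 0)
    (hET_step : ∀ i j, i ≠ j → ET i j = 1 + ∑ k, P i k * ET k j)
    (hET_sym : ∀ i j, ET i j = ET j i)
    (π : V → ℝ)
    (hπ : ∀ i, π i = (G.degree i : ℝ) / (2 * (G.edgeFinset.card : ℝ)))
    (tav : ℝ)
    (htav : tav = ∑ i, ∑ j, π i * π j * ET i j)
    (ν : V → ℝ)
    (hν0 : ∀ i, 0 ≤ ν i) (hν1 : ∑ i, ν i = 1) :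
    univ.sup' univ_nonempty (fun j => ∑ i, (π i - ν i) * ET i j)
      = tav - univ.inf' univ_nonempty (fun j => ∑ i, ν i * ET i j) ∧
    univ.sup' univ_nonempty (fun j => ∑ i, (π i - ν i) * ET i j) ≤ tav :=
  rw_symmetric_hitting_access_time_from_stationary_general G hG P hP ET hET_diag hET_step hET_sym π
    hπ tav htav ν hν0
end

section
/- For the simple random walk on the n-path {0,1,…,n} with reflecting boundaries, the access time equals H(μ,ν) = E_{Z∼ν}[Z²] − E_{Z∼μ}[Z²] + 2n · max_{j ∈ {0,…,n}} ( E_{Z∼μ}[(Z−j)₊] − E_{Z∼ν}[(Z−j)₊] ), where x₊ := max{x,0}. -/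
/-!
Fix the target `j`. Away from `j` the first-step equations say that `i ↦ E_i[τ_j]` has second
difference `-2`, and reflection at `0` gives `E_0[τ_j] - E_1[τ_j] = 1`; hence the increments
`E_i[τ_j] - E_{i+1}[τ_j]` are `2i + 1` to the left of `j`, and, reflecting the path, `2(n - i) + 1`
to the right of `j`. Summing them gives `E_i[τ_j] = j² - i² + 2n (i - j)₊`. Averaging against
`μ - ν` removes `j²` because both have total mass one, and the factor `2n ≥ 0` commutes with the
maximum over `j`.
-/

open Finset

/-- The transition probabilities of the statement, read on `ℕ`-indices so that sums over
`Fin (n + 1)` become sums over `range (n + 1)`. -/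
noncomputable def pathStep (n i k : ℕ) : ℝ :=
  if i = 0 then (if k = 1 then 1 else 0)
  else if i = n then (if k + 1 = n then 1 else 0)
  else if k = i + 1 ∨ k + 1 = i then 1 / 2 else 0

section pathStep

variable {n : ℕ} (v : ℕ → ℝ)

theorem sum_pathStep_zero_mul (hn : 0 < n) :
    ∑ k ∈ range (n + 1), pathStep n 0 k * v k = v 1 := by
  simp [pathStep, ite_mul, hn]

theorem sum_pathStep_self_mul (hn : 0 < n) :
    ∑ k ∈ range (n + 1), pathStep n n k * v k = v (n - 1) := by
  have hk : ∀ k, k + 1 = n ↔ k = n - 1 := by omega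
  simp [pathStep, ite_mul, hn.ne', hk]

theorem sum_pathStep_mul_of_pos_of_lt {i : ℕ} (h0 : 0 < i) (hi : i < n) :
    ∑ k ∈ range (n + 1), pathStep n i k * v k = (v (i - 1) + v (i + 1)) / 2 := by
  have hsplit : ∀ k, pathStep n i k =
      (if k = i - 1 then 1 / 2 else 0) + (if k = i + 1 then 1 / 2 else 0) := by
    intro k
    simp only [pathStep, if_neg h0.ne', if_neg hi.ne]
    split_ifs <;> first | omega | norm_num
  have hmem : i - 1 < n + 1 ∧ i + 1 < n + 1 := by omega
  simp [hsplit, add_mul, ite_mul, sum_add_distrib, hmem]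
  ring

end pathStep

theorem eq_add_sq_sub_sq_of_reflecting_at_zero {f : ℕ → ℝ} {j : ℕ}
    (h0 : 0 < j → f 0 = 1 + f 1)
    (hstep : ∀ i, 0 < i → i < j → f i = 1 + (f (i - 1) + f (i + 1)) / 2) :
    ∀ i ≤ j, f i = f j + j ^ 2 - i ^ 2 := by
  have hdiff : ∀ i < j, f i = f (i + 1) + (2 * i + 1) := by
    intro i
    induction i with
    | zero => intro h; rw [h0 h]; ring
    | succ i ih =>
      intro h
      have hi := hstep (i + 1) i.succ_pos h
      have hprev := ih (by omega)
      rw [Nat.add_sub_cancel] at hi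
      push_cast
      linarith
  intro i hij
  induction hij using Nat.decreasingInduction with
  | self => ring
  | of_succ k hk ih => rw [hdiff k hk, ih]; push_cast; ring

theorem eq_add_sq_sub_sq_add_of_reflecting_at_top {f : ℕ → ℝ} {n j : ℕ} (hjn : j ≤ n)
    (hn : j < n → f n = 1 + f (n - 1))
    (hstep : ∀ i, j < i → i < n → f i = 1 + (f (i - 1) + f (i + 1)) / 2) :
    ∀ i, j ≤ i → i ≤ n → f i = f j + j ^ 2 - i ^ 2 + 2 * n * (i - j) := by
  intro i hji hin
  have hmirror := eq_add_sq_sub_sq_of_reflecting_at_zero (f := fun k => f (n - k)) (j := n - j)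
    (fun h => by simpa using hn (by omega))
    (fun k hk0 hk => by
      have hk' := hstep (n - k) (by omega) (by omega)
      rw [show n - k - 1 = n - (k + 1) by omega, show n - k + 1 = n - (k - 1) by omega] at hk'
      linarith)
    (n - i) (by omega)
  simp only [Nat.sub_sub_self hin, Nat.sub_sub_self hjn] at hmirror
  rw [hmirror]
  push_cast [hin, hjn]
  ring

open Fin.NatCast in
theorem hittingTime_eq_of_pathStep {n : ℕ} (hn : 0 < n) {P ET : Fin (n + 1) → Fin (n + 1) → ℝ}
    (hP : ∀ i k, P i k = pathStep n i k) (hET_diag : ∀ j, ET j j = 0)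
    (hET_step : ∀ i j, i ≠ j → ET i j = 1 + ∑ k, P i k * ET k j) (i j : Fin (n + 1)) :
    ET i j = (j : ℝ) ^ 2 - (i : ℝ) ^ 2 + 2 * n * max ((i : ℝ) - j) 0 := by
  have hrec : ∀ k ≤ n, k ≠ j →
      ET k j = 1 + ∑ l ∈ range (n + 1), pathStep n k l * ET l j := by
    intro k hk hkj
    have hk' : ((k : Fin (n + 1)) : ℕ) = k := Fin.val_cast_of_lt (by omega)
    rw [hET_step _ _ (fun h => hkj (by rw [← h, hk'])),
      ← Fin.sum_univ_eq_sum_range (fun l => pathStep n k l * ET l j)]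
    simp [hP, hk']
  have hleft := eq_add_sq_sub_sq_of_reflecting_at_zero (f := fun k => ET k j) (j := j)
    (fun h => by rw [hrec 0 (by omega) (by omega), sum_pathStep_zero_mul _ hn])
    (fun k hk0 hk => by
      rw [hrec k (by omega) (by omega), sum_pathStep_mul_of_pos_of_lt _ hk0 (by omega)])
  have hright := eq_add_sq_sub_sq_add_of_reflecting_at_top (f := fun k => ET k j) j.is_le
    (fun h => by rw [hrec n le_rfl (by omega), sum_pathStep_self_mul _ hn])
    (fun k hk0 hk => by
      rw [hrec k (by omega) (by omega), sum_pathStep_mul_of_pos_of_lt _ (by omega) hk])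
  rcases le_total i j with hij | hji
  · have hmax : max ((i : ℝ) - j) 0 = 0 := max_eq_right (sub_nonpos.2 (Nat.cast_le.2 hij))
    simpa [hET_diag, hmax] using hleft i hij
  · have hmax : max ((i : ℝ) - j) 0 = i - j := max_eq_left (sub_nonneg.2 (Nat.cast_le.2 hji))
    simpa [hET_diag, hmax] using hright i hji i.is_le

theorem npath_access_time_formula_general
    (n : ℕ) (hn : 0 < n)
    (P : Fin (n + 1) → Fin (n + 1) → ℝ)
    (hP : ∀ i j : Fin (n + 1), P i j =
      if (i : ℕ) = 0 then (if (j : ℕ) = 1 then 1 else 0)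
      else if (i : ℕ) = n then (if (j : ℕ) + 1 = n then 1 else 0)
      else if (j : ℕ) = (i : ℕ) + 1 ∨ (j : ℕ) + 1 = (i : ℕ) then 1 / 2 else 0)
    (ET : Fin (n + 1) → Fin (n + 1) → ℝ)
    (hET_diag : ∀ j, ET j j = 0)
    (hET_step : ∀ i j, i ≠ j → ET i j = 1 + ∑ k, P i k * ET k j)
    (μ ν : Fin (n + 1) → ℝ)
    (hμ1 : ∑ i, μ i = 1)
    (hν1 : ∑ i, ν i = 1) :
    univ.sup' univ_nonempty (fun j => ∑ i, (μ i - ν i) * ET i j)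
      = (∑ i, ν i * (i : ℝ) ^ 2) - (∑ i, μ i * (i : ℝ) ^ 2)
        + 2 * n * univ.sup' univ_nonempty (fun j : Fin (n + 1) =>
            (∑ i, μ i * max ((i : ℝ) - (j : ℝ)) 0)
            - (∑ i, ν i * max ((i : ℝ) - (j : ℝ)) 0)) := by
  have hET := hittingTime_eq_of_pathStep hn hP hET_diag hET_step
  rw [mul₀_sup' (by positivity), add_sup']
  refine sup'_congr _ rfl fun j _ => ?_
  have hterm : ∀ i, (μ i - ν i) * ET i j = (j : ℝ) ^ 2 * (μ i - ν i)
      + (ν i * (i : ℝ) ^ 2 - μ i * (i : ℝ) ^ 2)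
      + 2 * n * (μ i * max ((i : ℝ) - j) 0 - ν i * max ((i : ℝ) - j) 0) := fun i => by
    rw [hET]; ring
  simp only [hterm, sum_add_distrib, sum_sub_distrib, ← mul_sum, hμ1, hν1]
  ring

/-- For the simple random walk on the n-path `{0,…,n}` with reflecting
boundaries, the access time `H(μ,ν) = max_j Σ_i (μ_i − ν_i) E_i[τ_j]` equals
`E_ν[Z²] − E_μ[Z²] + 2n · max_j (E_μ[(Z−j)₊] − E_ν[(Z−j)₊])`. -/
theorem npath_access_time_formula
    (n : ℕ) (hn : 0 < n)
    (P : Fin (n + 1) → Fin (n + 1) → ℝ)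
    (hP : ∀ i j : Fin (n + 1), P i j =
      if (i : ℕ) = 0 then (if (j : ℕ) = 1 then 1 else 0)
      else if (i : ℕ) = n then (if (j : ℕ) + 1 = n then 1 else 0)
      else if (j : ℕ) = (i : ℕ) + 1 ∨ (j : ℕ) + 1 = (i : ℕ) then 1 / 2 else 0)
    (ET : Fin (n + 1) → Fin (n + 1) → ℝ)
    (hET_diag : ∀ j, ET j j = 0)
    (hET_step : ∀ i j, i ≠ j → ET i j = 1 + ∑ k, P i k * ET k j)
    (μ ν : Fin (n + 1) → ℝ)
    (hμ0 : ∀ i, 0 ≤ μ i) (hμ1 : ∑ i, μ i = 1)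
    (hν0 : ∀ i, 0 ≤ ν i) (hν1 : ∑ i, ν i = 1) :
    univ.sup' univ_nonempty (fun j => ∑ i, (μ i - ν i) * ET i j)
      = (∑ i, ν i * (i : ℝ) ^ 2) - (∑ i, μ i * (i : ℝ) ^ 2)
        + 2 * n * univ.sup' univ_nonempty (fun j : Fin (n + 1) =>
            (∑ i, μ i * max ((i : ℝ) - (j : ℝ)) 0)
            - (∑ i, ν i * max ((i : ℝ) - (j : ℝ)) 0)) :=
  npath_access_time_formula_general n hn P hP ET hET_diag hET_step μ ν hμ1 hν1
end

section
/- For the simple random walk on the n-path {0,1,…,n} with reflecting boundaries, the access time satisfies max{ E_{Z∼ν}[Z²] − E_{Z∼μ}[Z²] + 2n( E_{Z∼μ}[Z] − E_{Z∼ν}[Z] ), 0 } ≤ H(μ,ν) ≤ n². -/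
/-!
The hitting-time equations of the reflected walk have the unique solution
`E_i[τ_j] = j² - i² + 2n (i - j)⁺`: this function solves them, and the difference of two solutions
satisfies the discrete mean-value property away from `j`, vanishes at `j` and has zero slope at
the reflecting ends `0` and `n`, so it vanishes. The solution takes values in `[0, n²]`, which gives
the upper bound; the target `j = 0` gives the explicit lower bound; and by the random target lemma
some target gives a nonnegative value.
-/

open Finset

theorem eq_apply_zero_of_two_mul_eq_add {d : ℕ → ℝ} {j : ℕ} (h_zero : 0 < j → d 1 = d 0)
    (h_mid : ∀ m, m + 1 < j → 2 * d (m + 1) = d m + d (m + 2)) : ∀ m ≤ j, d m = d 0 := by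
  have h_step : ∀ m < j, d (m + 1) = d m := by
    intro m hm
    induction m with
    | zero => exact h_zero hm
    | succ m ih => linarith [ih (by omega), h_mid m hm]
  intro m hm
  induction m with
  | zero => rfl
  | succ m ih => rw [h_step m hm, ih (by omega)]

theorem eq_zero_of_harmonic_on_path {d : ℕ → ℝ} {n j : ℕ} (hj : j ≤ n) (h_target : d j = 0)
    (h_zero : 0 < j → d 1 = d 0)
    (h_mid : ∀ m, m + 1 < n → m + 1 ≠ j → 2 * d (m + 1) = d m + d (m + 2))
    (h_last : j < n → d (n - 1) = d n) : ∀ m ≤ n, d m = 0 := by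
  have below := eq_apply_zero_of_two_mul_eq_add h_zero fun m hm => h_mid m (by omega) (by omega)
  have above := eq_apply_zero_of_two_mul_eq_add (d := fun m => d (n - m)) (j := n - j)
    (fun h => h_last (by omega)) fun m hm => by
      have h := h_mid (n - m - 2) (by omega) (by omega)
      rw [show n - m - 2 + 1 = n - (m + 1) by omega, show n - m - 2 + 2 = n - m by omega,
        show n - m - 2 = n - (m + 2) by omega] at h
      linarith
  intro m hm
  rcases le_total m j with hmj | hjm
  · rw [below m hmj, ← below j le_rfl, h_target]
  · have hdm := above (n - m) (by omega)
    have hdj := above (n - j) le_rfl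
    rw [Nat.sub_sub_self hm, Nat.sub_zero] at hdm
    rw [Nat.sub_sub_self hj, Nat.sub_zero] at hdj
    rw [hdm, ← hdj, h_target]

theorem sum_sub_mul_le {ι : Type*} [Fintype ι] {μ ν h : ι → ℝ} {c : ℝ} (hμ0 : ∀ i, 0 ≤ μ i)
    (hμ1 : ∑ i, μ i = 1) (hν0 : ∀ i, 0 ≤ ν i) (h0 : ∀ i, 0 ≤ h i) (hc : ∀ i, h i ≤ c) :
    ∑ i, (μ i - ν i) * h i ≤ c :=
  calc ∑ i, (μ i - ν i) * h i = ∑ i, μ i * h i - ∑ i, ν i * h i := by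
        simp only [sub_mul, sum_sub_distrib]
    _ ≤ ∑ i, μ i * c - 0 := by
        gcongr with i
        · exact hμ0 i
        · exact hc i
        · exact sum_nonneg fun i _ => mul_nonneg (hν0 i) (h0 i)
    _ = c := by rw [← sum_mul, hμ1, one_mul, sub_zero]

noncomputable def pathKernel (n i k : ℕ) : ℝ :=
  if i = 0 then (if k = 1 then 1 else 0)
  else if i = n then (if k + 1 = n then 1 else 0)
  else if k = i + 1 ∨ k + 1 = i then 1 / 2 else 0

section pathKernel

variable {n : ℕ} (x : ℕ → ℝ)

theorem sum_pathKernel_zero_mul (hn : 0 < n) :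
    ∑ k ∈ range (n + 1), pathKernel n 0 k * x k = x 1 := by
  simp [pathKernel, sum_ite_eq', show 1 < n + 1 by omega]

theorem sum_pathKernel_self_mul (hn : 0 < n) :
    ∑ k ∈ range (n + 1), pathKernel n n k * x k = x (n - 1) := by
  have h : ∀ k, k + 1 = n ↔ k = n - 1 := by omega
  simp [pathKernel, hn.ne', h, sum_ite_eq', show n - 1 < n + 1 by omega]

theorem sum_pathKernel_succ_mul {m : ℕ} (hm : m + 1 < n) :
    ∑ k ∈ range (n + 1), pathKernel n (m + 1) k * x k = (x m + x (m + 2)) / 2 := by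
  have hmn : m + 1 ≠ n := by omega
  rw [sum_eq_add m (m + 2) (by omega)]
  · simp [pathKernel, hmn, div_eq_inv_mul, mul_add]
  · intro k _ hk
    simp [pathKernel, hmn, hk.1, show k ≠ m + 1 + 1 by omega]
  all_goals exact fun h => absurd (mem_range.2 (by omega)) h

end pathKernel

noncomputable def pathHittingTime (n i j : ℕ) : ℝ :=
  (j : ℝ) ^ 2 - (i : ℝ) ^ 2 + 2 * n * max ((i : ℝ) - j) 0

section pathHittingTime

variable {n i j : ℕ}

theorem pathHittingTime_of_le (h : i ≤ j) :
    pathHittingTime n i j = (j : ℝ) ^ 2 - (i : ℝ) ^ 2 := by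
  have : (i : ℝ) ≤ j := by exact_mod_cast h
  simp [pathHittingTime, this]

theorem pathHittingTime_of_ge (h : j ≤ i) :
    pathHittingTime n i j = (j : ℝ) ^ 2 - (i : ℝ) ^ 2 + 2 * n * ((i : ℝ) - j) := by
  have : (j : ℝ) ≤ i := by exact_mod_cast h
  simp [pathHittingTime, this]

@[simp]
theorem pathHittingTime_self : pathHittingTime n j j = 0 := by
  simp [pathHittingTime]

theorem pathHittingTime_zero_eq (hj : 0 < j) :
    pathHittingTime n 0 j = 1 + pathHittingTime n 1 j := by
  rw [pathHittingTime_of_le hj.le, pathHittingTime_of_le hj]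
  push_cast; ring

theorem pathHittingTime_succ_eq {m : ℕ} (hm : m + 1 ≠ j) :
    pathHittingTime n (m + 1) j =
      1 + (pathHittingTime n m j + pathHittingTime n (m + 2) j) / 2 := by
  rcases lt_or_gt_of_ne hm with h | h
  · rw [pathHittingTime_of_le h.le, pathHittingTime_of_le (by omega),
      pathHittingTime_of_le (by omega)]
    push_cast; ring
  · rw [pathHittingTime_of_ge h.le, pathHittingTime_of_ge (by omega),
      pathHittingTime_of_ge (by omega)]
    push_cast; ring

theorem pathHittingTime_last_eq (hj : j < n) :
    pathHittingTime n n j = 1 + pathHittingTime n (n - 1) j := by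
  rw [pathHittingTime_of_ge hj.le, pathHittingTime_of_ge (by omega)]
  rw [Nat.cast_sub (by omega)]
  push_cast; ring

theorem pathHittingTime_nonneg (hi : i ≤ n) (hj : j ≤ n) : 0 ≤ pathHittingTime n i j := by
  have hi' : (i : ℝ) ≤ n := by exact_mod_cast hi
  have hj' : (j : ℝ) ≤ n := by exact_mod_cast hj
  rcases le_total i j with h | h
  · have : (i : ℝ) ≤ j := by exact_mod_cast h
    rw [pathHittingTime_of_le h]
    nlinarith [(i.cast_nonneg : (0 : ℝ) ≤ i)]
  · have : (j : ℝ) ≤ i := by exact_mod_cast h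
    rw [pathHittingTime_of_ge h]
    nlinarith

theorem pathHittingTime_le_sq (hi : i ≤ n) (hj : j ≤ n) :
    pathHittingTime n i j ≤ (n : ℝ) ^ 2 := by
  have hi' : (i : ℝ) ≤ n := by exact_mod_cast hi
  have hj' : (j : ℝ) ≤ n := by exact_mod_cast hj
  rcases le_total i j with h | h
  · rw [pathHittingTime_of_le h]
    nlinarith [(i.cast_nonneg : (0 : ℝ) ≤ i)]
  · rw [pathHittingTime_of_ge h]
    nlinarith [sq_nonneg ((n : ℝ) - i), (j.cast_nonneg : (0 : ℝ) ≤ j)]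

theorem sum_range_pathHittingTime_add_succ (hi : i ≤ n) :
    ∑ j ∈ range n, (pathHittingTime n i j + pathHittingTime n i (j + 1)) =
      ∑ j ∈ range n, ((j : ℝ) ^ 2 + ((j + 1 : ℕ) : ℝ) ^ 2) := by
  have hterm : ∀ j : ℕ, max ((i : ℝ) - j) 0 + max ((i : ℝ) - (j + 1 : ℕ)) 0 =
      max ((i : ℝ) - j) 0 ^ 2 - max ((i : ℝ) - (j + 1 : ℕ)) 0 ^ 2 := by
    intro j
    rcases lt_or_ge j i with h | h
    · have : (j : ℝ) + 1 ≤ i := by exact_mod_cast h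
      push_cast
      rw [max_eq_left (by linarith), max_eq_left (by linarith)]
      ring
    · have : (i : ℝ) ≤ j := by exact_mod_cast h
      push_cast
      rw [max_eq_right (by linarith), max_eq_right (by linarith)]
      ring
  have hsum : ∑ j ∈ range n, (max ((i : ℝ) - j) 0 + max ((i : ℝ) - (j + 1 : ℕ)) 0) =
      (i : ℝ) ^ 2 := by
    rw [sum_congr rfl fun j _ => hterm j, sum_range_sub' (fun j : ℕ => max ((i : ℝ) - j) 0 ^ 2)]
    have : (i : ℝ) ≤ n := by exact_mod_cast hi
    simp [max_eq_right (sub_nonpos.2 this)]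
  calc ∑ j ∈ range n, (pathHittingTime n i j + pathHittingTime n i (j + 1))
      = ∑ j ∈ range n, (((j : ℝ) ^ 2 + ((j + 1 : ℕ) : ℝ) ^ 2) +
          (2 * n * (max ((i : ℝ) - j) 0 + max ((i : ℝ) - (j + 1 : ℕ)) 0) - 2 * (i : ℝ) ^ 2)) :=
        sum_congr rfl fun j _ => by simp only [pathHittingTime]; ring
    _ = ∑ j ∈ range n, ((j : ℝ) ^ 2 + ((j + 1 : ℕ) : ℝ) ^ 2) +
          (2 * n * (i : ℝ) ^ 2 - n * (2 * (i : ℝ) ^ 2)) := by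
        rw [sum_add_distrib, sum_sub_distrib, ← mul_sum, hsum, sum_const, card_range, nsmul_eq_mul]
    _ = _ := by ring

end pathHittingTime

theorem eq_pathHittingTime_of_rows {a : ℕ → ℝ} {n j : ℕ} (hj : j ≤ n) (h_target : a j = 0)
    (h_zero : 0 < j → a 0 = 1 + a 1)
    (h_mid : ∀ m, m + 1 < n → m + 1 ≠ j → a (m + 1) = 1 + (a m + a (m + 2)) / 2)
    (h_last : j < n → a n = 1 + a (n - 1)) : ∀ m ≤ n, a m = pathHittingTime n m j := by
  have hdiff := eq_zero_of_harmonic_on_path (d := fun m => a m - pathHittingTime n m j) hj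
    (by simp [h_target])
    (fun h => by linarith [h_zero h, pathHittingTime_zero_eq (n := n) h])
    (fun m hm hmj => by linarith [h_mid m hm hmj, pathHittingTime_succ_eq (n := n) hmj])
    (fun h => by linarith [h_last h, pathHittingTime_last_eq h])
  intro m hm
  linarith [hdiff m hm]

open Fin.NatCast in
theorem eq_pathHittingTime {n : ℕ} (hn : 0 < n) {P ET : Fin (n + 1) → Fin (n + 1) → ℝ}
    (hP : ∀ i k, P i k = pathKernel n i k) (hdiag : ∀ j, ET j j = 0)
    (hstep : ∀ i j, i ≠ j → ET i j = 1 + ∑ k, P i k * ET k j) (i j : Fin (n + 1)) :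
    ET i j = pathHittingTime n i j := by
  have hrow : ∀ m ≤ n, m ≠ (j : ℕ) →
      ET (m : Fin (n + 1)) j =
        1 + ∑ k ∈ range (n + 1), pathKernel n m k * ET (k : Fin (n + 1)) j := by
    intro m hm hmj
    have hval : ((m : Fin (n + 1)) : ℕ) = m := Fin.val_cast_of_lt (by omega)
    rw [hstep _ _ fun h => hmj (by rw [← h, hval]),
      ← Fin.sum_univ_eq_sum_range (fun k => pathKernel n m k * ET (k : Fin (n + 1)) j)]
    simp only [hP, hval, Fin.cast_val_eq_self]
  have hsol := eq_pathHittingTime_of_rows (a := fun m => ET (m : Fin (n + 1)) j) j.is_le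
    (by simp only [Fin.cast_val_eq_self, hdiag])
    (fun h => by simpa [sum_pathKernel_zero_mul _ hn] using hrow 0 (by omega) (by omega))
    (fun m hm hmj => by
      simpa [sum_pathKernel_succ_mul _ hm] using hrow (m + 1) (by omega) hmj)
    (fun h => by simpa [sum_pathKernel_self_mul _ hn] using hrow n le_rfl (by omega))
  simpa using hsol i i.is_le

theorem sum_sub_mul_pathHittingTime_zero {n : ℕ} (μ ν : Fin (n + 1) → ℝ) :
    ∑ i, (μ i - ν i) * pathHittingTime n i 0 =
      (∑ i, ν i * (i : ℝ) ^ 2) - (∑ i, μ i * (i : ℝ) ^ 2)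
        + 2 * n * ((∑ i, μ i * (i : ℝ)) - (∑ i, ν i * (i : ℝ))) := by
  simp only [pathHittingTime_of_ge (Nat.zero_le _), mul_sum, ← sum_sub_distrib, ← sum_add_distrib]
  exact sum_congr rfl fun i _ => by push_cast; ring

theorem exists_nonneg_sum_mul_pathHittingTime {n : ℕ} (hn : 0 < n) {δ : Fin (n + 1) → ℝ}
    (hδ : ∑ i, δ i = 0) : ∃ j : Fin (n + 1), 0 ≤ ∑ i, δ i * pathHittingTime n i j := by
  set g : ℕ → ℝ := fun j => ∑ i : Fin (n + 1), δ i * pathHittingTime n i j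
  -- Random target lemma: averaged over the target with the stationary distribution, which is
  -- proportional to the degree and so is a sum over the edges `{j, j + 1}`, the hitting time does
  -- not depend on the starting point.
  have hg : ∑ j ∈ range n, (g j + g (j + 1)) = 0 := by
    simp only [g, ← sum_add_distrib, ← mul_add]
    rw [sum_comm]
    simp only [← mul_sum, sum_range_pathHittingTime_add_succ (Fin.is_le _), ← sum_mul, hδ, zero_mul]
  by_contra! hneg
  have : ∑ j ∈ range n, (g j + g (j + 1)) < 0 :=
    sum_neg (fun j hj => add_neg (hneg ⟨j, by rw [mem_range] at hj; omega⟩)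
      (hneg ⟨j + 1, by rw [mem_range] at hj; omega⟩))
      (nonempty_range_iff.2 hn.ne')
  linarith

/-- For the simple random walk on the n-path `{0,…,n}` with reflecting
boundaries, the access time `H(μ,ν) = max_j Σ_i (μ_i − ν_i) E_i[τ_j]` satisfies
`max{E_ν[Z²] − E_μ[Z²] + 2n(E_μ[Z] − E_ν[Z]), 0} ≤ H(μ,ν) ≤ n²`. -/
theorem npath_access_time_bounds
    (n : ℕ) (hn : 0 < n)
    (P : Fin (n + 1) → Fin (n + 1) → ℝ)
    (hP : ∀ i j : Fin (n + 1), P i j =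
      if (i : ℕ) = 0 then (if (j : ℕ) = 1 then 1 else 0)
      else if (i : ℕ) = n then (if (j : ℕ) + 1 = n then 1 else 0)
      else if (j : ℕ) = (i : ℕ) + 1 ∨ (j : ℕ) + 1 = (i : ℕ) then 1 / 2 else 0)
    (ET : Fin (n + 1) → Fin (n + 1) → ℝ)
    (hET_diag : ∀ j, ET j j = 0)
    (hET_step : ∀ i j, i ≠ j → ET i j = 1 + ∑ k, P i k * ET k j)
    (μ ν : Fin (n + 1) → ℝ)
    (hμ0 : ∀ i, 0 ≤ μ i) (hμ1 : ∑ i, μ i = 1)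
    (hν0 : ∀ i, 0 ≤ ν i) (hν1 : ∑ i, ν i = 1) :
    max ((∑ i, ν i * (i : ℝ) ^ 2) - (∑ i, μ i * (i : ℝ) ^ 2)
        + 2 * n * ((∑ i, μ i * (i : ℝ)) - (∑ i, ν i * (i : ℝ)))) 0
      ≤ univ.sup' univ_nonempty (fun j => ∑ i, (μ i - ν i) * ET i j) ∧
    univ.sup' univ_nonempty (fun j => ∑ i, (μ i - ν i) * ET i j)
      ≤ (n : ℝ) ^ 2 := by
  simp only [eq_pathHittingTime hn hP hET_diag hET_step]
  have hle (j : Fin (n + 1)) := le_sup' (s := univ)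
    (fun j : Fin (n + 1) => ∑ i, (μ i - ν i) * pathHittingTime n i j) (mem_univ j)
  refine ⟨max_le ?_ ?_, sup'_le _ _ fun j _ => ?_⟩
  · rw [← sum_sub_mul_pathHittingTime_zero]
    exact hle 0
  · obtain ⟨j, hj⟩ := exists_nonneg_sum_mul_pathHittingTime hn (δ := μ - ν)
      (by simp [sum_sub_distrib, hμ1, hν1])
    exact hj.trans (hle j)
  · exact sum_sub_mul_le hμ0 hμ1 hν0 (fun i => pathHittingTime_nonneg i.is_le j.is_le)
      fun i => pathHittingTime_le_sq i.is_le j.is_le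
end

section
/- For the simple random walk on the n-star with center 0, the access time equals H(μ,ν) = ν_0 − μ_0 + 2n · max{ max_{j ∈ {1,…,n}} (ν_j − μ_j), 0 }. -/
open Finset

/-!
First-step analysis determines all mean hitting times of the star walk: a leaf reaches the
center in one step, the center reaches a given leaf in `2n - 1` steps on average, and one leaf
reaches another in `2n`. Since `μ - ν` has total mass zero, the constant parts of these
hitting times cancel in `∑ i, (μ i - ν i) * E_i[τ_j]`, which leaves `ν 0 - μ 0` for `j = 0`
and `ν 0 - μ 0 + 2n (ν j - μ j)` for a leaf `j`; the access time is the largest of these.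
-/

theorem Fin.sup'_univ_succ {α : Type*} [SemilatticeSup α] {n : ℕ} (f : Fin (n + 1) → α)
    (hn : (univ : Finset (Fin n)).Nonempty) :
    univ.sup' univ_nonempty f = f 0 ⊔ univ.sup' hn (fun k => f k.succ) := by
  refine eq_of_forall_ge_iff fun c => ?_
  simp [Finset.sup'_le_iff, Fin.forall_fin_succ]

theorem Finset.sum_mul_eq_of_eq_off {ι R : Type*} [Fintype ι] [DecidableEq ι] [CommRing R]
    {d f : ι → R} {l : ι} {a : R} (hl : f l = 0) (hf : ∀ k ≠ l, f k = a) :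
    ∑ k, d k * f k = a * (∑ k, d k - d l) := by
  rw [← add_sum_erase _ _ (mem_univ l), hl, mul_zero, zero_add,
    ← sum_erase_eq_sub (mem_univ l), mul_sum]
  refine sum_congr rfl fun k hk => ?_
  rw [hf k (ne_of_mem_erase hk), mul_comm]

theorem max_add_mul_sup' {ι : Type*} {s : Finset ι} (hs : s.Nonempty) {a : ℝ} (ha : 0 ≤ a)
    (c : ℝ) (f : ι → ℝ) :
    max c (s.sup' hs fun k => c + a * f k) = c + a * max (s.sup' hs f) 0 := by
  rw [← add_sup', ← mul₀_sup' ha, mul_max_of_nonneg _ _ ha, mul_zero, ← max_add_add_left,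
    add_zero, max_comm]

namespace StarWalk

noncomputable def kernel (n : ℕ) (i j : Fin (n + 1)) : ℝ :=
  if i = 0 then (if j = 0 then 0 else 1 / n) else (if j = 0 then 1 else 0)

variable {n : ℕ}

theorem kernel_sum_mul_of_ne_zero {i : Fin (n + 1)} (hi : i ≠ 0) (f : Fin (n + 1) → ℝ) :
    ∑ k, kernel n i k * f k = f 0 := by
  simp [kernel, hi]

theorem kernel_zero_sum_mul (f : Fin (n + 1) → ℝ) :
    ∑ k, kernel n 0 k * f k = (∑ k : Fin n, f k.succ) / n := by
  simp [kernel, Fin.sum_univ_succ, div_eq_inv_mul, mul_sum]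

variable {ET : Fin (n + 1) → Fin (n + 1) → ℝ}

theorem hit_eq_one_add_hit_zero
    (hstep : ∀ i j, i ≠ j → ET i j = 1 + ∑ k, kernel n i k * ET k j)
    {i j : Fin (n + 1)} (hi : i ≠ 0) (hij : i ≠ j) : ET i j = 1 + ET 0 j := by
  rw [hstep i j hij, kernel_sum_mul_of_ne_zero hi]

theorem hit_succ_zero (hdiag : ∀ j, ET j j = 0)
    (hstep : ∀ i j, i ≠ j → ET i j = 1 + ∑ k, kernel n i k * ET k j) (k : Fin n) :
    ET k.succ 0 = 1 := by
  rw [hit_eq_one_add_hit_zero hstep k.succ_ne_zero k.succ_ne_zero, hdiag, add_zero]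

theorem hit_zero_succ (hdiag : ∀ j, ET j j = 0)
    (hstep : ∀ i j, i ≠ j → ET i j = 1 + ∑ k, kernel n i k * ET k j) (l : Fin n) :
    ET 0 l.succ = 2 * n - 1 := by
  have hleaves : ∑ k : Fin n, ET k.succ l.succ = (1 + ET 0 l.succ) * (n - 1) := by
    simpa using sum_mul_eq_of_eq_off (d := fun _ => (1 : ℝ)) (f := fun k => ET k.succ l.succ)
      (hdiag l.succ)
      fun k hk => hit_eq_one_add_hit_zero hstep k.succ_ne_zero (Fin.succ_injective _ |>.ne hk)
  have hcenter := hstep 0 l.succ l.succ_ne_zero.symm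
  rw [kernel_zero_sum_mul, hleaves] at hcenter
  have hn : (n : ℝ) ≠ 0 := Nat.cast_ne_zero.mpr (Fin.pos l).ne'
  field_simp at hcenter
  linarith

theorem hit_succ_succ (hdiag : ∀ j, ET j j = 0)
    (hstep : ∀ i j, i ≠ j → ET i j = 1 + ∑ k, kernel n i k * ET k j) {k l : Fin n}
    (hkl : k ≠ l) : ET k.succ l.succ = 2 * n := by
  rw [hit_eq_one_add_hit_zero hstep k.succ_ne_zero (Fin.succ_injective _ |>.ne hkl),
    hit_zero_succ hdiag hstep]
  ring

theorem sum_mul_hit_zero (hdiag : ∀ j, ET j j = 0)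
    (hstep : ∀ i j, i ≠ j → ET i j = 1 + ∑ k, kernel n i k * ET k j)
    {d : Fin (n + 1) → ℝ} (hd : ∑ i, d i = 0) : ∑ i, d i * ET i 0 = -d 0 := by
  simp only [Fin.sum_univ_succ, hdiag, hit_succ_zero hdiag hstep, mul_zero, mul_one] at hd ⊢
  linarith

theorem sum_mul_hit_succ (hdiag : ∀ j, ET j j = 0)
    (hstep : ∀ i j, i ≠ j → ET i j = 1 + ∑ k, kernel n i k * ET k j)
    {d : Fin (n + 1) → ℝ} (hd : ∑ i, d i = 0) (l : Fin n) :
    ∑ i, d i * ET i l.succ = -d 0 + 2 * n * -d l.succ := by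
  rw [Fin.sum_univ_succ] at hd ⊢
  rw [hit_zero_succ hdiag hstep,
    sum_mul_eq_of_eq_off (f := fun k => ET k.succ l.succ) (hdiag l.succ)
      fun k hk => hit_succ_succ hdiag hstep hk]
  linear_combination (2 * n : ℝ) * hd

end StarWalk

theorem nstar_access_time_formula_general
    (n : ℕ) (hn : 0 < n)
    (P : Fin (n + 1) → Fin (n + 1) → ℝ)
    (hP : ∀ i j : Fin (n + 1), P i j =
      if (i : ℕ) = 0 then (if (j : ℕ) = 0 then 0 else 1 / (n : ℝ))
      else (if (j : ℕ) = 0 then 1 else 0))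
    (ET : Fin (n + 1) → Fin (n + 1) → ℝ)
    (hET_diag : ∀ j, ET j j = 0)
    (hET_step : ∀ i j, i ≠ j → ET i j = 1 + ∑ k, P i k * ET k j)
    (μ ν : Fin (n + 1) → ℝ)
    (hμ1 : ∑ i, μ i = 1) (hν1 : ∑ i, ν i = 1) :
    univ.sup' univ_nonempty (fun j => ∑ i, (μ i - ν i) * ET i j)
      = ν 0 - μ 0 + 2 * n *
          max (univ.sup' ⟨⟨0, hn⟩, mem_univ _⟩
            (fun k : Fin n => ν k.succ - μ k.succ)) 0 := by
  obtain rfl : P = StarWalk.kernel n := by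
    ext i j
    simp only [hP, StarWalk.kernel, Fin.val_eq_zero_iff]
  have hd : ∑ i, (μ i - ν i) = 0 := by rw [sum_sub_distrib, hμ1, hν1, sub_self]
  rw [Fin.sup'_univ_succ _ ⟨⟨0, hn⟩, mem_univ _⟩,
    StarWalk.sum_mul_hit_zero hET_diag hET_step hd]
  simp only [StarWalk.sum_mul_hit_succ hET_diag hET_step hd, neg_sub]
  exact max_add_mul_sup' _ (by positivity) _ _

/-- For the simple random walk on the n-star with center `0`
(from `0` the walk moves to a uniformly random leaf, and from each leaf to `0`;
mean hitting times `ET` are characterized by the first-step equations), the access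
time `H(μ,ν) = max_j Σ_i (μ_i − ν_i) E_i[τ_j]` equals
`ν_0 − μ_0 + 2n · max{max_{j ∈ {1,…,n}} (ν_j − μ_j), 0}`. -/
theorem nstar_access_time_formula
    (n : ℕ) (hn : 0 < n)
    (P : Fin (n + 1) → Fin (n + 1) → ℝ)
    (hP : ∀ i j : Fin (n + 1), P i j =
      if (i : ℕ) = 0 then (if (j : ℕ) = 0 then 0 else 1 / (n : ℝ))
      else (if (j : ℕ) = 0 then 1 else 0))
    (ET : Fin (n + 1) → Fin (n + 1) → ℝ)
    (hET_diag : ∀ j, ET j j = 0)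
    (hET_step : ∀ i j, i ≠ j → ET i j = 1 + ∑ k, P i k * ET k j)
    (μ ν : Fin (n + 1) → ℝ)
    (hμ0 : ∀ i, 0 ≤ μ i) (hμ1 : ∑ i, μ i = 1)
    (hν0 : ∀ i, 0 ≤ ν i) (hν1 : ∑ i, ν i = 1) :
    univ.sup' univ_nonempty (fun j => ∑ i, (μ i - ν i) * ET i j)
      = ν 0 - μ 0 + 2 * n *
          max (univ.sup' ⟨⟨0, hn⟩, mem_univ _⟩
            (fun k : Fin n => ν k.succ - μ k.succ)) 0 :=
  nstar_access_time_formula_general n hn P hP ET hET_diag hET_step μ ν hμ1 hν1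
end

section
/- For the simple random walk on the n-star with center 0, the access time satisfies, for every j ∈ {1,…,n}, ν_0 − μ_0 + 2n · max{ν_j − μ_j, 0} ≤ H(μ,ν) ≤ (2n+1) · ‖μ − ν‖_TV ≤ 2n + 1, where ‖μ − ν‖_TV := (1/2) Σ_i |μ_i − ν_i| is the total variation distance. -/
/-!
The first-step equations on the star can be solved outright: `E_i[τ_0] = 1` from a leaf,
`E_0[τ_j] = 2n - 1`, and `E_i[τ_j] = 2n` between distinct leaves. With `d = μ - ν`, which has
total mass zero, this gives `∑ d_i E_i[τ_0] = ν_0 - μ_0` and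
`∑ d_i E_i[τ_j] = ν_0 - μ_0 + 2n (ν_j - μ_j)`, whence the lower bound. Since every hitting time
lies in `[0, 2n]`, each sum is at most `2n ∑ d_i⁺ = 2n ‖μ - ν‖_TV`.
-/

open Finset

section TotalVariation

variable {ι : Type*} [Fintype ι]

theorem sum_mul_le_mul_sum_max_zero (d E : ι → ℝ) {M : ℝ} (hE0 : ∀ i, 0 ≤ E i)
    (hEM : ∀ i, E i ≤ M) : ∑ i, d i * E i ≤ M * ∑ i, max (d i) 0 := by
  rw [mul_sum]
  refine sum_le_sum fun i _ => ?_
  calc d i * E i ≤ max (d i) 0 * E i := mul_le_mul_of_nonneg_right (le_max_left _ _) (hE0 i)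
    _ ≤ max (d i) 0 * M := mul_le_mul_of_nonneg_left (hEM i) (le_max_right _ _)
    _ = M * max (d i) 0 := mul_comm _ _

theorem sum_max_zero_eq_half_sum_abs {d : ι → ℝ} (hd : ∑ i, d i = 0) :
    ∑ i, max (d i) 0 = 1 / 2 * ∑ i, |d i| := by
  have hterm : ∀ i, max (d i) 0 = (d i + |d i|) / 2 := fun i => by
    cases abs_cases (d i) <;> cases max_cases (d i) 0 <;> linarith
  rw [sum_congr rfl fun i _ => hterm i, ← sum_div, sum_add_distrib, hd]
  ring

theorem half_sum_abs_sub_le_one {μ ν : ι → ℝ} (hμ0 : ∀ i, 0 ≤ μ i) (hμ1 : ∑ i, μ i = 1)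
    (hν0 : ∀ i, 0 ≤ ν i) (hν1 : ∑ i, ν i = 1) : 1 / 2 * ∑ i, |μ i - ν i| ≤ 1 := by
  have h : ∑ i, |μ i - ν i| ≤ ∑ i, (μ i + ν i) := sum_le_sum fun i _ =>
    abs_sub_le_iff.2 ⟨by linarith [hν0 i], by linarith [hμ0 i]⟩
  rw [sum_add_distrib, hμ1, hν1] at h
  linarith

end TotalVariation

section Star

variable {n : ℕ}

noncomputable def starStep (n : ℕ) (i j : Fin (n + 1)) : ℝ :=
  if (i : ℕ) = 0 then (if (j : ℕ) = 0 then 0 else 1 / (n : ℝ))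
  else (if (j : ℕ) = 0 then 1 else 0)

theorem sum_starStep_mul_of_ne_zero {i : Fin (n + 1)} (hi : i ≠ 0) (f : Fin (n + 1) → ℝ) :
    ∑ k, starStep n i k * f k = f 0 := by
  simp [starStep, Fin.val_eq_zero_iff, hi]

theorem sum_starStep_zero_mul (f : Fin (n + 1) → ℝ) :
    ∑ k, starStep n 0 k * f k = (∑ k : Fin n, f k.succ) / n := by
  simp [starStep, Fin.sum_univ_succ, ← mul_sum, div_eq_inv_mul]

def starHittingTime (n : ℕ) (i t : Fin (n + 1)) : ℝ :=
  if i = t then 0 else if t = 0 then 1 else if i = 0 then 2 * n - 1 else 2 * n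

section FirstStep

variable {ET : Fin (n + 1) → Fin (n + 1) → ℝ}

theorem hittingTime_leaf (hET_step : ∀ i j, i ≠ j → ET i j = 1 + ∑ k, starStep n i k * ET k j)
    {i t : Fin (n + 1)} (hi : i ≠ 0) (hit : i ≠ t) : ET i t = 1 + ET 0 t := by
  rw [hET_step i t hit, sum_starStep_mul_of_ne_zero hi]

theorem hittingTime_center_leaf (hET_diag : ∀ j, ET j j = 0)
    (hET_step : ∀ i j, i ≠ j → ET i j = 1 + ∑ k, starStep n i k * ET k j) (s : Fin n) :
    ET 0 s.succ = 2 * n - 1 := by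
  set x := ET 0 s.succ
  have hleaves : ∀ k : Fin n, ET k.succ s.succ = (1 + x) - if k = s then 1 + x else 0 := by
    intro k
    by_cases hk : k = s
    · simp [hk, hET_diag]
    · simp [hk, hittingTime_leaf hET_step (Fin.succ_ne_zero k) (Fin.succ_inj.not.2 hk), x]
  have hn : (n : ℝ) ≠ 0 := Nat.cast_ne_zero.2 (Fin.pos s).ne'
  have h := hET_step 0 s.succ (Fin.succ_ne_zero s).symm
  simp only [sum_starStep_zero_mul, hleaves, sum_sub_distrib, sum_const, card_univ,
    Fintype.card_fin, nsmul_eq_mul, sum_ite_eq', mem_univ, if_true] at h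
  field_simp at h
  linarith

theorem hittingTime_eq_starHittingTime (hET_diag : ∀ j, ET j j = 0)
    (hET_step : ∀ i j, i ≠ j → ET i j = 1 + ∑ k, starStep n i k * ET k j) :
    ET = starHittingTime n := by
  ext i t
  unfold starHittingTime
  split_ifs with hit ht hi
  · exact hit ▸ hET_diag i
  · rw [hittingTime_leaf hET_step (ht ▸ hit) hit, ht, hET_diag, add_zero]
  · obtain ⟨s, rfl⟩ := Fin.exists_succ_eq.2 ht
    rw [hi, hittingTime_center_leaf hET_diag hET_step]
  · obtain ⟨s, rfl⟩ := Fin.exists_succ_eq.2 ht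
    rw [hittingTime_leaf hET_step hi hit, hittingTime_center_leaf hET_diag hET_step]
    ring

end FirstStep

theorem starHittingTime_nonneg (hn : 0 < n) (i t : Fin (n + 1)) : 0 ≤ starHittingTime n i t := by
  have : (1 : ℝ) ≤ n := Nat.one_le_cast.2 hn
  unfold starHittingTime
  split_ifs <;> linarith

theorem starHittingTime_le (hn : 0 < n) (i t : Fin (n + 1)) : starHittingTime n i t ≤ 2 * n := by
  have : (1 : ℝ) ≤ n := Nat.one_le_cast.2 hn
  unfold starHittingTime
  split_ifs <;> linarith

variable {d : Fin (n + 1) → ℝ}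

theorem sum_mul_starHittingTime_zero (hd : ∑ i, d i = 0) :
    ∑ i, d i * starHittingTime n i 0 = -d 0 := by
  have hterm : ∀ i, d i * starHittingTime n i 0 = d i - if i = 0 then d i else 0 := by
    intro i
    by_cases hi : i = 0 <;> simp [starHittingTime, hi]
  simp only [hterm, sum_sub_distrib, hd, sum_ite_eq', mem_univ, if_true, zero_sub]

theorem sum_mul_starHittingTime_of_ne_zero (hd : ∑ i, d i = 0) {t : Fin (n + 1)} (ht : t ≠ 0) :
    ∑ i, d i * starHittingTime n i t = -d 0 - 2 * n * d t := by
  have hterm : ∀ i, d i * starHittingTime n i t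
      = 2 * n * d i - (if i = t then 2 * n * d i else 0) - if i = 0 then d i else 0 := by
    intro i
    by_cases hit : i = t
    · subst hit; simp [starHittingTime, ht]
    · by_cases hi : i = 0 <;> simp [starHittingTime, hit, hi, ht, Ne.symm ht] <;> ring
  simp only [hterm, sum_sub_distrib, ← mul_sum, hd, sum_ite_eq', mem_univ, if_true]
  ring

end Star

theorem nstar_access_time_bounds_general
    (n : ℕ)
    (P : Fin (n + 1) → Fin (n + 1) → ℝ)
    (hP : ∀ i j : Fin (n + 1), P i j =
      if (i : ℕ) = 0 then (if (j : ℕ) = 0 then 0 else 1 / (n : ℝ))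
      else (if (j : ℕ) = 0 then 1 else 0))
    (ET : Fin (n + 1) → Fin (n + 1) → ℝ)
    (hET_diag : ∀ j, ET j j = 0)
    (hET_step : ∀ i j, i ≠ j → ET i j = 1 + ∑ k, P i k * ET k j)
    (μ ν : Fin (n + 1) → ℝ)
    (hμ0 : ∀ i, 0 ≤ μ i) (hμ1 : ∑ i, μ i = 1)
    (hν0 : ∀ i, 0 ≤ ν i) (hν1 : ∑ i, ν i = 1)
    (j : Fin (n + 1)) (hj : (j : ℕ) ≠ 0) :
    ν 0 - μ 0 + 2 * n * max (ν j - μ j) 0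
      ≤ univ.sup' univ_nonempty (fun j => ∑ i, (μ i - ν i) * ET i j) ∧
    univ.sup' univ_nonempty (fun j => ∑ i, (μ i - ν i) * ET i j)
      ≤ (2 * (n : ℝ) + 1) * (1 / 2 * ∑ i, |μ i - ν i|) ∧
    (2 * (n : ℝ) + 1) * (1 / 2 * ∑ i, |μ i - ν i|) ≤ 2 * (n : ℝ) + 1 := by
  have hn : 0 < n := by omega
  obtain rfl : P = starStep n := funext₂ hP
  obtain rfl : ET = starHittingTime n := hittingTime_eq_starHittingTime hET_diag hET_step
  have hd : ∑ i, (μ i - ν i) = 0 := by rw [sum_sub_distrib, hμ1, hν1, sub_self]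
  have hTV := half_sum_abs_sub_le_one hμ0 hμ1 hν0 hν1
  have hTV0 : 0 ≤ 1 / 2 * ∑ i, |μ i - ν i| := by positivity
  refine ⟨?_, sup'_le _ _ fun t _ => ?_, mul_le_of_le_one_right (by positivity) hTV⟩
  · have h0 := le_sup' (fun t => ∑ i, (μ i - ν i) * starHittingTime n i t) (mem_univ 0)
    have hj' := le_sup' (fun t => ∑ i, (μ i - ν i) * starHittingTime n i t) (mem_univ j)
    simp only [sum_mul_starHittingTime_zero hd,
      sum_mul_starHittingTime_of_ne_zero hd (Fin.val_ne_zero_iff.1 hj)] at h0 hj'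
    rcases max_cases (ν j - μ j) 0 with ⟨hmax, -⟩ | ⟨hmax, -⟩ <;> rw [hmax] <;> linarith
  · calc ∑ i, (μ i - ν i) * starHittingTime n i t
        ≤ 2 * n * ∑ i, max (μ i - ν i) 0 := sum_mul_le_mul_sum_max_zero _ _
          (starHittingTime_nonneg hn · t) (starHittingTime_le hn · t)
      _ ≤ (2 * n + 1) * (1 / 2 * ∑ i, |μ i - ν i|) := by
        rw [sum_max_zero_eq_half_sum_abs hd]; linarith

/-- For the simple random walk on the n-star with center `0`
(from `0` the walk moves to a uniformly random leaf, and from each leaf to `0`;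
mean hitting times `ET` are characterized by the first-step equations), the access
time satisfies, for every leaf `j`,
`ν_0 − μ_0 + 2n · max{ν_j − μ_j, 0} ≤ H(μ,ν) ≤ (2n+1) · ‖μ − ν‖_TV ≤ 2n + 1`,
where `‖μ − ν‖_TV = (1/2) Σ_i |μ_i − ν_i|`. -/
theorem nstar_access_time_bounds
    (n : ℕ) (hn : 0 < n)
    (P : Fin (n + 1) → Fin (n + 1) → ℝ)
    (hP : ∀ i j : Fin (n + 1), P i j =
      if (i : ℕ) = 0 then (if (j : ℕ) = 0 then 0 else 1 / (n : ℝ))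
      else (if (j : ℕ) = 0 then 1 else 0))
    (ET : Fin (n + 1) → Fin (n + 1) → ℝ)
    (hET_diag : ∀ j, ET j j = 0)
    (hET_step : ∀ i j, i ≠ j → ET i j = 1 + ∑ k, P i k * ET k j)
    (μ ν : Fin (n + 1) → ℝ)
    (hμ0 : ∀ i, 0 ≤ μ i) (hμ1 : ∑ i, μ i = 1)
    (hν0 : ∀ i, 0 ≤ ν i) (hν1 : ∑ i, ν i = 1)
    (j : Fin (n + 1)) (hj : (j : ℕ) ≠ 0) :
    ν 0 - μ 0 + 2 * n * max (ν j - μ j) 0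
      ≤ univ.sup' univ_nonempty (fun j => ∑ i, (μ i - ν i) * ET i j) ∧
    univ.sup' univ_nonempty (fun j => ∑ i, (μ i - ν i) * ET i j)
      ≤ (2 * (n : ℝ) + 1) * (1 / 2 * ∑ i, |μ i - ν i|) ∧
    (2 * (n : ℝ) + 1) * (1 / 2 * ∑ i, |μ i - ν i|) ≤ 2 * (n : ℝ) + 1 :=
  nstar_access_time_bounds_general n P hP ET hET_diag hET_step μ ν hμ0 hμ1 hν0 hν1 j hj
end
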